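/- arXiv:1410.1386 — 10 statements merged into one kernel-verified Lean document; each statement's English description precedes it below -/
import Mathlib

section
/- Let E be a real inner product space, f : E → ℝ differentiable with L-Lipschitz gradient for some L > 0, and r : E → ℝ any function; set F = f + r. Let x_prev, x ∈ E, ω ≥ 0, and x̂ = x + ω(x − x_prev). If x⁺ minimizes over E the function z ↦ ⟨∇f(x̂), z − x̂⟩ + L‖z − x̂‖² + r(z) (i.e., the prox-linear subproblem with stepsize α = 1/(2L)), then F(x) − F(x⁺) ≥ (L/4)‖x − x⁺‖² − 9 L ω² ‖x_prev − x‖². Consequently, if in addition ω ≤ (δ/6)·√(L′/L) for some constants L′ > 0 and 0 ≤ δ < 1, then F(x) − F(x⁺) ≥ (L/4)‖x − x⁺‖² − (δ² L′/4)‖x_prev − x‖². -/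
/-!
The descent lemma `|f y - f x - ⟪∇f x, y - x⟫| ≤ (L/2)‖y - x‖²` linearises `f` at `x̂` up to
`(L/2)‖x - x̂‖²` and `(L/2)‖x⁺ - x̂‖²`. Comparing the values of the prox-linear subproblem at its
minimiser `x⁺` and at `x` then gives `F x - F x⁺ ≥ (L/2)‖x⁺ - x̂‖² - (3L/2)‖x - x̂‖²`, and
`‖x - x⁺‖² ≤ 2‖x - x̂‖² + 2‖x⁺ - x̂‖²` together with `‖x - x̂‖ = ω‖x_prev - x‖` yields the bound
with `2Lω²`, a fortiori with `9Lω²`. The constant `9` is the one for which the step condition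
`ω ≤ (δ/6)√(L'/L)` turns `9Lω²` into `δ²L'/4`.
-/

open RealInnerProductSpace

section ProxLinear

variable {E : Type*} [NormedAddCommGroup E] [InnerProductSpace ℝ E]

theorem norm_sub_sq_le_two_mul_add (a b c : E) :
    ‖a - b‖ ^ 2 ≤ 2 * ‖a - c‖ ^ 2 + 2 * ‖b - c‖ ^ 2 := by
  have := parallelogram_law_with_norm ℝ (a - c) (b - c)
  rw [sub_sub_sub_cancel_right] at this
  nlinarith [sq_nonneg ‖a - c + (b - c)‖]

variable [CompleteSpace E] {f : E → ℝ} {g : E → E} {L : ℝ}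

theorem abs_sub_sub_inner_le_of_lipschitz_gradient (hdiff : ∀ x, HasGradientAt f (g x) x)
    (hlip : ∀ u v : E, ‖g u - g v‖ ≤ L * ‖u - v‖) (x y : E) :
    |f y - f x - ⟪g x, y - x⟫| ≤ L / 2 * ‖y - x‖ ^ 2 := by
  set v := y - x
  have hline : ∀ t : ℝ, HasDerivAt (fun s : ℝ => f (x + s • v) - f x - s * ⟪g x, v⟫)
      (⟪g (x + t • v) - g x, v⟫) t := by
    intro t
    have hpath : HasDerivAt (fun s : ℝ => x + s • v) v t := by
      simpa using ((hasDerivAt_id t).smul_const v).const_add x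
    have hf : HasDerivAt (fun s : ℝ => f (x + s • v)) ⟪g (x + t • v), v⟫ t := by
      simpa [InnerProductSpace.toDual_apply_apply, Function.comp_def] using
        (hdiff (x + t • v)).hasFDerivAt.comp_hasDerivAt t hpath
    rw [inner_sub_left]
    exact (hf.sub_const (f x)).sub (hasDerivAt_mul_const _)
  have hbound : ∀ t ∈ Set.Ico (0 : ℝ) 1, ‖⟪g (x + t • v) - g x, v⟫‖ ≤ L * t * ‖v‖ ^ 2 := by
    intro t ht
    calc ‖⟪g (x + t • v) - g x, v⟫‖ ≤ ‖g (x + t • v) - g x‖ * ‖v‖ := norm_inner_le_norm _ _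
      _ ≤ L * ‖t • v‖ * ‖v‖ := by
        gcongr
        simpa using hlip (x + t • v) x
      _ = L * t * ‖v‖ ^ 2 := by rw [norm_smul, Real.norm_of_nonneg ht.1]; ring
  have hquad : ∀ t : ℝ, HasDerivAt (fun s : ℝ => L / 2 * s ^ 2 * ‖v‖ ^ 2) (L * t * ‖v‖ ^ 2) t := by
    intro t
    refine (((hasDerivAt_pow 2 t).const_mul (L / 2)).mul_const (‖v‖ ^ 2)).congr_deriv ?_
    simp only [Nat.cast_ofNat, Nat.add_one_sub_one, pow_one]
    ring
  have := image_norm_le_of_norm_deriv_right_le_deriv_boundary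
    (fun t _ => (hline t).continuousAt.continuousWithinAt)
    (fun t _ => (hline t).hasDerivWithinAt) (by simp) hquad hbound
    (Set.right_mem_Icc.2 zero_le_one)
  simpa [v] using this

variable {r : E → ℝ} {xhat xplus : E}

theorem prox_linear_step_decrease (hdiff : ∀ x, HasGradientAt f (g x) x)
    (hlip : ∀ u v : E, ‖g u - g v‖ ≤ L * ‖u - v‖)
    (hmin : ∀ z : E,
      ⟪g xhat, xplus - xhat⟫ + L * ‖xplus - xhat‖ ^ 2 + r xplus ≤
        ⟪g xhat, z - xhat⟫ + L * ‖z - xhat‖ ^ 2 + r z) (y : E) :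
    L / 2 * ‖xplus - xhat‖ ^ 2 - 3 * L / 2 * ‖y - xhat‖ ^ 2 ≤
      (f y + r y) - (f xplus + r xplus) := by
  have hy := abs_le.1 (abs_sub_sub_inner_le_of_lipschitz_gradient hdiff hlip xhat y)
  have hplus := abs_le.1 (abs_sub_sub_inner_le_of_lipschitz_gradient hdiff hlip xhat xplus)
  linarith [hmin y]

theorem prox_linear_step_decrease_dist (hL : 0 ≤ L) (hdiff : ∀ x, HasGradientAt f (g x) x)
    (hlip : ∀ u v : E, ‖g u - g v‖ ≤ L * ‖u - v‖)
    (hmin : ∀ z : E,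
      ⟪g xhat, xplus - xhat⟫ + L * ‖xplus - xhat‖ ^ 2 + r xplus ≤
        ⟪g xhat, z - xhat⟫ + L * ‖z - xhat‖ ^ 2 + r z) (y : E) :
    L / 4 * ‖y - xplus‖ ^ 2 - 2 * L * ‖y - xhat‖ ^ 2 ≤ (f y + r y) - (f xplus + r xplus) := by
  have hdecr := prox_linear_step_decrease hdiff hlip hmin y
  have hsplit := mul_le_mul_of_nonneg_left (norm_sub_sq_le_two_mul_add y xplus xhat)
    (by positivity : 0 ≤ L / 4)
  linarith

end ProxLinear

/-- Lemma 2.1 (block prox-linear descent, stepsize `1/(2L)`):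
objective decrease of one prox-linear step with extrapolation. -/
theorem prox_linear_descent_half
    {E : Type*} [NormedAddCommGroup E] [InnerProductSpace ℝ E] [CompleteSpace E]
    (f : E → ℝ) (g : E → E) (r : E → ℝ) (L : ℝ) (hL : 0 < L)
    (hdiff : ∀ x, HasGradientAt f (g x) x)
    (hlip : ∀ u v : E, ‖g u - g v‖ ≤ L * ‖u - v‖)
    (x_prev x : E) (ω : ℝ) (hω : 0 ≤ ω)
    (xhat : E) (hxhat : xhat = x + ω • (x - x_prev))
    (xplus : E)
    (hmin : ∀ z : E,
      ⟪g xhat, xplus - xhat⟫ + L * ‖xplus - xhat‖ ^ 2 + r xplus ≤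
        ⟪g xhat, z - xhat⟫ + L * ‖z - xhat‖ ^ 2 + r z) :
    (f x + r x) - (f xplus + r xplus) ≥
        L / 4 * ‖x - xplus‖ ^ 2 - 9 * L * ω ^ 2 * ‖x_prev - x‖ ^ 2 ∧
      ∀ L' δ : ℝ, 0 < L' → 0 ≤ δ → δ < 1 → ω ≤ δ / 6 * Real.sqrt (L' / L) →
        (f x + r x) - (f xplus + r xplus) ≥
          L / 4 * ‖x - xplus‖ ^ 2 - δ ^ 2 * L' / 4 * ‖x_prev - x‖ ^ 2 := by
  have hextra : ‖x - xhat‖ ^ 2 = ω ^ 2 * ‖x_prev - x‖ ^ 2 := by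
    rw [hxhat, sub_add_cancel_left, ← smul_neg, neg_sub, norm_smul, Real.norm_eq_abs, mul_pow,
      sq_abs]
  have hdecr := prox_linear_step_decrease_dist hL.le hdiff hlip hmin x
  rw [hextra] at hdecr
  have hfirst : (f x + r x) - (f xplus + r xplus) ≥
      L / 4 * ‖x - xplus‖ ^ 2 - 9 * L * ω ^ 2 * ‖x_prev - x‖ ^ 2 := by
    linarith [mul_nonneg hL.le (mul_nonneg (sq_nonneg ω) (sq_nonneg ‖x_prev - x‖))]
  refine ⟨hfirst, fun L' δ hL' _ _ hωδ => ?_⟩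
  have hω_sq : ω ^ 2 ≤ δ ^ 2 / 36 * (L' / L) := by
    calc ω ^ 2 ≤ (δ / 6 * Real.sqrt (L' / L)) ^ 2 := pow_le_pow_left₀ hω hωδ 2
      _ = δ ^ 2 / 36 * (L' / L) := by rw [mul_pow, Real.sq_sqrt (by positivity)]; ring
  have hcoeff : 9 * L * ω ^ 2 ≤ δ ^ 2 * L' / 4 := by
    calc 9 * L * ω ^ 2 ≤ 9 * L * (δ ^ 2 / 36 * (L' / L)) := by gcongr
      _ = δ ^ 2 * L' / 4 := by field_simp; ring
  have := mul_le_mul_of_nonneg_right hcoeff (sq_nonneg ‖x_prev - x‖)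
  linarith
end

section
/- Let E be a real inner product space, f : E → ℝ convex and differentiable with L-Lipschitz gradient for some L > 0, and r : E → ℝ convex; set F = f + r. Let x_prev, x ∈ E, ω ≥ 0, and x̂ = x + ω(x − x_prev). If x⁺ minimizes over E the function z ↦ ⟨∇f(x̂), z − x̂⟩ + (L/2)‖z − x̂‖² + r(z) (prox-linear subproblem with stepsize α = 1/L), then F(x) − F(x⁺) ≥ (L/2)‖x⁺ − x‖² − (L ω²/2)‖x − x_prev‖². -/
/-!
Write `x̂` for the extrapolated point and `x⁺` for the prox-linear step. Three inequalities
are added up. Convexity of `f` gives `f x ≥ f x̂ + ⟪∇f x̂, x - x̂⟫`; the Lipschitz gradient gives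
the descent lemma `f x⁺ ≤ f x̂ + ⟪∇f x̂, x⁺ - x̂⟫ + L/2 ‖x⁺ - x̂‖²`; and since the prox
objective is a convex function plus `L/2 ‖· - x̂‖²`, its minimizer `x⁺` satisfies the
three-point inequality, the objective at `x` exceeding its value at `x⁺` by at least
`L/2 ‖x - x⁺‖²`. The sum is the claim, with `‖x - x̂‖ = |ω| ‖x - x_prev‖`.
-/

open RealInnerProductSpace AffineMap Filter Set Topology

lemma le_of_forall_le_add_mul {a b c : ℝ} (h : ∀ t ∈ Ioc (0 : ℝ) 1, a ≤ b + t * c) : a ≤ b := by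
  have hlim : Tendsto (fun t : ℝ => b + t * c) (𝓝[>] 0) (𝓝 b) := by
    simpa using ((by fun_prop : Continuous fun t : ℝ => b + t * c).tendsto 0).mono_left
      nhdsWithin_le_nhds
  exact ge_of_tendsto hlim (eventually_of_mem (Ioc_mem_nhdsGT zero_lt_one) h)

section InnerProductSpace

variable {E : Type*} [NormedAddCommGroup E] [InnerProductSpace ℝ E]

section Gradient

variable [CompleteSpace E] {f : E → ℝ}

lemma HasGradientAt.hasDerivAt_comp_lineMap {g' u w : E} {t : ℝ}
    (h : HasGradientAt f g' (lineMap u w t)) :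
    HasDerivAt (f ∘ lineMap u w) ⟪g', w - u⟫ t := by
  simpa using h.hasFDerivAt.comp_hasDerivAt t hasDerivAt_lineMap

theorem ConvexOn.add_inner_le_of_hasGradientAt {s : Set E} {g' u w : E}
    (hf : ConvexOn ℝ s f) (hu : u ∈ s) (hw : w ∈ s) (hg : HasGradientAt f g' u) :
    f u + ⟪g', w - u⟫ ≤ f w := by
  have hline := hf.comp_affineMap (lineMap (k := ℝ) u w)
  have hderiv : HasDerivAt (f ∘ lineMap (k := ℝ) u w) ⟪g', w - u⟫ 0 :=
    HasGradientAt.hasDerivAt_comp_lineMap (by rwa [lineMap_apply_zero])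
  have := hline.le_slope_of_hasDerivAt (x := (0 : ℝ)) (y := 1) (by simpa) (by simpa)
    zero_lt_one hderiv
  simp only [slope_def_field, Function.comp_apply, lineMap_apply_one, lineMap_apply_zero,
    sub_zero, div_one] at this
  linarith

theorem le_add_inner_add_sq_norm_of_lipschitz_gradient {g : E → E} {L : ℝ}
    (hf : ∀ x, HasGradientAt f (g x) x) (hg : ∀ x y, ‖g x - g y‖ ≤ L * ‖x - y‖) (u v : E) :
    f v ≤ f u + ⟪g u, v - u⟫ + L / 2 * ‖v - u‖ ^ 2 := by
  -- `f` on the segment minus its quadratic model has nonpositive derivative, by the Lipschitz bound.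
  set ψ : ℝ → ℝ := fun t => f (lineMap u v t) - t * ⟪g u, v - u⟫ - L / 2 * t ^ 2 * ‖v - u‖ ^ 2
  have hψ (t : ℝ) : HasDerivAt ψ
      (⟪g (lineMap u v t), v - u⟫ - ⟪g u, v - u⟫ - L * t * ‖v - u‖ ^ 2) t := by
    refine ((((hf (lineMap u v t)).hasDerivAt_comp_lineMap).sub
      ((hasDerivAt_id t).mul_const ⟪g u, v - u⟫)).sub
      ((((hasDerivAt_id t).pow 2).const_mul (L / 2)).mul_const (‖v - u‖ ^ 2))).congr_deriv ?_
    simp only [id_eq, one_mul, mul_one, Nat.cast_ofNat, Nat.add_one_sub_one, pow_one]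
    ring
  have hψ_nonpos (t : ℝ) (ht : 0 ≤ t) :
      ⟪g (lineMap u v t), v - u⟫ - ⟪g u, v - u⟫ - L * t * ‖v - u‖ ^ 2 ≤ 0 := by
    have hstep : lineMap u v t - u = t • (v - u) := by
      rw [lineMap_apply_module']; abel
    calc ⟪g (lineMap u v t), v - u⟫ - ⟪g u, v - u⟫ - L * t * ‖v - u‖ ^ 2
        = ⟪g (lineMap u v t) - g u, v - u⟫ - L * t * ‖v - u‖ ^ 2 := by rw [inner_sub_left]
      _ ≤ ‖g (lineMap u v t) - g u‖ * ‖v - u‖ - L * t * ‖v - u‖ ^ 2 := by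
        gcongr; exact real_inner_le_norm _ _
      _ ≤ L * ‖lineMap u v t - u‖ * ‖v - u‖ - L * t * ‖v - u‖ ^ 2 := by
        gcongr; exact hg _ _
      _ = 0 := by rw [hstep, norm_smul, Real.norm_of_nonneg ht]; ring
  have hanti : AntitoneOn ψ (Icc 0 1) :=
    antitoneOn_of_hasDerivWithinAt_nonpos (convex_Icc 0 1)
      (fun t _ => (hψ t).continuousAt.continuousWithinAt)
      (fun t _ => (hψ t).hasDerivWithinAt)
      (fun t ht => hψ_nonpos t (interior_subset ht).1)
  have := hanti (by simp) (by simp) zero_le_one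
  simp only [ψ, lineMap_apply_one, lineMap_apply_zero, one_mul, one_pow, mul_one, zero_mul,
    sub_zero, ne_eq, OfNat.ofNat_ne_zero, not_false_eq_true, zero_pow, mul_zero] at this
  linarith

end Gradient

section Prox

variable {s : Set E} {h : E → ℝ} {L : ℝ} {c p z : E}

theorem IsMinOn.le_add_inner_of_convexOn (hh : ConvexOn ℝ s h)
    (hmin : IsMinOn (fun y => h y + L / 2 * ‖y - c‖ ^ 2) s p) (hp : p ∈ s) (hz : z ∈ s) :
    h p ≤ h z + L * ⟪p - c, z - p⟫ := by
  -- Compare `p` with the points `lineMap p z t` of the segment, divide by `t` and let `t → 0`.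
  refine le_of_forall_le_add_mul (c := L / 2 * ‖z - p‖ ^ 2) fun t ht => ?_
  have hmem : lineMap p z t ∈ s := hh.1.lineMap_mem hp hz (Ioc_subset_Icc_self ht)
  have hle := isMinOn_iff.1 hmin _ hmem
  have hconv : h (lineMap p z t) ≤ (1 - t) * h p + t * h z := by
    simpa [lineMap_apply_module] using
      hh.2 hp hz (sub_nonneg.2 ht.2) ht.1.le (sub_add_cancel 1 t)
  have hnorm : ‖lineMap p z t - c‖ ^ 2
      = ‖p - c‖ ^ 2 + 2 * t * ⟪p - c, z - p⟫ + t ^ 2 * ‖z - p‖ ^ 2 := by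
    rw [show lineMap p z t - c = (p - c) + t • (z - p) by rw [lineMap_apply_module']; abel,
      norm_add_sq_real, real_inner_smul_right, norm_smul, mul_pow, Real.norm_eq_abs, sq_abs]
    ring
  simp only [hnorm] at hle
  have : t * h p ≤ t * (h z + L * ⟪p - c, z - p⟫ + t * (L / 2 * ‖z - p‖ ^ 2)) := by nlinarith
  exact le_of_mul_le_mul_left this ht.1

theorem IsMinOn.add_sq_norm_sub_le_of_convexOn (hh : ConvexOn ℝ s h)
    (hmin : IsMinOn (fun y => h y + L / 2 * ‖y - c‖ ^ 2) s p) (hp : p ∈ s) (hz : z ∈ s) :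
    h p + L / 2 * ‖p - c‖ ^ 2 + L / 2 * ‖z - p‖ ^ 2 ≤ h z + L / 2 * ‖z - c‖ ^ 2 := by
  have hvar := hmin.le_add_inner_of_convexOn hh hp hz
  have hnorm : ‖z - c‖ ^ 2 = ‖p - c‖ ^ 2 + 2 * ⟪p - c, z - p⟫ + ‖z - p‖ ^ 2 := by
    rw [← norm_add_sq_real, sub_add_sub_cancel']
  rw [hnorm]
  linarith

end Prox

end InnerProductSpace

theorem prox_linear_descent_convex_general
    {E : Type*} [NormedAddCommGroup E] [InnerProductSpace ℝ E] [CompleteSpace E]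
    (f : E → ℝ) (g : E → E) (r : E → ℝ) (L : ℝ)
    (hfconv : ConvexOn ℝ Set.univ f) (hrconv : ConvexOn ℝ Set.univ r)
    (hdiff : ∀ x, HasGradientAt f (g x) x)
    (hlip : ∀ u v : E, ‖g u - g v‖ ≤ L * ‖u - v‖)
    (x_prev x : E) (ω : ℝ)
    (xhat : E) (hxhat : xhat = x + ω • (x - x_prev))
    (xplus : E)
    (hmin : ∀ z : E,
      ⟪g xhat, xplus - xhat⟫ + L / 2 * ‖xplus - xhat‖ ^ 2 + r xplus ≤
        ⟪g xhat, z - xhat⟫ + L / 2 * ‖z - xhat‖ ^ 2 + r z) :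
    (f x + r x) - (f xplus + r xplus) ≥
      L / 2 * ‖xplus - x‖ ^ 2 - L * ω ^ 2 / 2 * ‖x - x_prev‖ ^ 2 := by
  have hconv : ConvexOn ℝ univ (r + fun z => ⟪g xhat, z⟫) :=
    hrconv.add ((innerₛₗ ℝ (g xhat)).convexOn convex_univ)
  have hprox : IsMinOn (fun z => (r + fun z => ⟪g xhat, z⟫) z + L / 2 * ‖z - xhat‖ ^ 2)
      univ xplus := isMinOn_univ_iff.2 fun z => by
    have := hmin z
    simp only [Pi.add_apply, inner_sub_right] at this ⊢
    linarith
  have hthree := hprox.add_sq_norm_sub_le_of_convexOn hconv (mem_univ xplus) (mem_univ x)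
  have hlower := hfconv.add_inner_le_of_hasGradientAt (mem_univ xhat) (mem_univ x) (hdiff xhat)
  have hupper := le_add_inner_add_sq_norm_of_lipschitz_gradient hdiff hlip xhat xplus
  have hextra : ‖x - xhat‖ ^ 2 = ω ^ 2 * ‖x - x_prev‖ ^ 2 := by
    rw [hxhat, sub_add_cancel_left, norm_neg, norm_smul, mul_pow, Real.norm_eq_abs, sq_abs]
  simp only [Pi.add_apply, inner_sub_right] at hthree hlower hupper
  rw [norm_sub_rev xplus x, show L * ω ^ 2 / 2 * ‖x - x_prev‖ ^ 2 = L / 2 * ‖x - xhat‖ ^ 2 by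
    rw [hextra]; ring]
  linarith

/-- Remark 2.2 (convex case, stepsize `1/L`): objective decrease of one
prox-linear step with extrapolation when `f` and `r` are convex. -/
theorem prox_linear_descent_convex
    {E : Type*} [NormedAddCommGroup E] [InnerProductSpace ℝ E] [CompleteSpace E]
    (f : E → ℝ) (g : E → E) (r : E → ℝ) (L : ℝ) (hL : 0 < L)
    (hfconv : ConvexOn ℝ Set.univ f) (hrconv : ConvexOn ℝ Set.univ r)
    (hdiff : ∀ x, HasGradientAt f (g x) x)
    (hlip : ∀ u v : E, ‖g u - g v‖ ≤ L * ‖u - v‖)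
    (x_prev x : E) (ω : ℝ) (hω : 0 ≤ ω)
    (xhat : E) (hxhat : xhat = x + ω • (x - x_prev))
    (xplus : E)
    (hmin : ∀ z : E,
      ⟪g xhat, xplus - xhat⟫ + L / 2 * ‖xplus - xhat‖ ^ 2 + r xplus ≤
        ⟪g xhat, z - xhat⟫ + L / 2 * ‖z - xhat‖ ^ 2 + r z) :
    (f x + r x) - (f xplus + r xplus) ≥
      L / 2 * ‖xplus - x‖ ^ 2 - L * ω ^ 2 / 2 * ‖x - x_prev‖ ^ 2 :=
  prox_linear_descent_convex_general f g r L hfconv hrconv hdiff hlip x_prev x ω xhat hxhat xplus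
    hmin
end

section
/- Let (F_k)_{k≥0} be a sequence of real numbers bounded below, (a_k)_{k≥0} a sequence of nonnegative reals with a_0 = 0, and (L_k)_{k≥0} a sequence of reals with 0 < ℓ ≤ L_k ≤ L̄ < ∞ for all k, and let 0 ≤ δ < 1. If for every k ≥ 1 it holds that F_{k−1} − F_k ≥ (1/4)(L_k a_k² − δ² L_{k−1} a_{k−1}²), then the series ∑_{k≥1} a_k² converges (in particular ∑_{k≥1} a_k² ≤ 4(F_0 − inf_k F_k)/(ℓ(1 − δ²))). -/
/-! With `b k = L k * a k ^ 2`, the decrease condition telescopes to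
`(1 - δ²) ∑_{k<n} b k + b n ≤ 4 (F 0 - F n)`, because the one-step defect `δ² b k` is paid
for by the term `b k` carried along from the previous step. Since `F` is bounded below and
`ℓ ≤ L k`, the partial sums of `a k ^ 2` are uniformly bounded. -/

open Finset

theorem one_sub_mul_sum_range_add_le {b F : ℕ → ℝ} {q : ℝ} (hb0 : b 0 = 0)
    (h : ∀ k, b (k + 1) - q * b k ≤ F k - F (k + 1)) (n : ℕ) :
    (1 - q) * ∑ k ∈ range n, b k + b n ≤ F 0 - F n := by
  induction n with
  | zero => simp [hb0]
  | succ n ih =>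
    rw [sum_range_succ]
    linarith [h n]

theorem square_summable_of_sufficient_decrease_general
    (F a L : ℕ → ℝ) (ℓ Lbar δ : ℝ)
    (hbdd : BddBelow (Set.range F))
    (ha0 : a 0 = 0)
    (hℓ : 0 < ℓ) (hL : ∀ k, ℓ ≤ L k ∧ L k ≤ Lbar)
    (hδ0 : 0 ≤ δ) (hδ1 : δ < 1)
    (hdec : ∀ k : ℕ,
      F k - F (k + 1) ≥ (1 / 4) * (L (k + 1) * a (k + 1) ^ 2 - δ ^ 2 * L k * a k ^ 2)) :
    Summable (fun k => a k ^ 2) ∧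
      ∑' k, a k ^ 2 ≤ 4 * (F 0 - ⨅ k, F k) / (ℓ * (1 - δ ^ 2)) := by
  have hδ : 0 < 1 - δ ^ 2 := by nlinarith
  have htelescope := one_sub_mul_sum_range_add_le (b := fun k => L k * a k ^ 2)
    (F := fun k => 4 * F k) (q := δ ^ 2) (by simp [ha0]) (fun k => by linarith [hdec k])
  have hbound (n : ℕ) :
      ∑ k ∈ range n, a k ^ 2 ≤ 4 * (F 0 - ⨅ k, F k) / (ℓ * (1 - δ ^ 2)) := by
    rw [le_div_iff₀' (mul_pos hℓ hδ)]
    have hweight : ℓ * ∑ k ∈ range n, a k ^ 2 ≤ ∑ k ∈ range n, L k * a k ^ 2 := by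
      rw [mul_sum]
      gcongr with k
      exact (hL k).1
    have hlast : 0 ≤ L n * a n ^ 2 := mul_nonneg (hℓ.trans_le (hL n).1).le (sq_nonneg _)
    calc ℓ * (1 - δ ^ 2) * ∑ k ∈ range n, a k ^ 2
        = (1 - δ ^ 2) * (ℓ * ∑ k ∈ range n, a k ^ 2) := by ring
      _ ≤ (1 - δ ^ 2) * ∑ k ∈ range n, L k * a k ^ 2 := by gcongr
      _ ≤ 4 * F 0 - 4 * F n := by linarith [htelescope n]
      _ ≤ 4 * (F 0 - ⨅ k, F k) := by linarith [ciInf_le hbdd n]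
  have hsummable : Summable (fun k => a k ^ 2) :=
    summable_of_sum_range_le (fun _ => sq_nonneg _) hbound
  exact ⟨hsummable, hsummable.tsum_le_of_sum_range_le hbound⟩

/-- Proposition 2.1 (square summable, abstract sequence form): if the objective
values `F k` decrease by at least `(1/4)(L_k a_k² − δ² L_{k−1} a_{k−1}²)` at each
iteration and are bounded below, then `∑ a_k²` converges with the stated bound. -/
theorem square_summable_of_sufficient_decrease
    (F a L : ℕ → ℝ) (ℓ Lbar δ : ℝ)
    (hbdd : BddBelow (Set.range F))
    (ha : ∀ k, 0 ≤ a k) (ha0 : a 0 = 0)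
    (hℓ : 0 < ℓ) (hL : ∀ k, ℓ ≤ L k ∧ L k ≤ Lbar)
    (hδ0 : 0 ≤ δ) (hδ1 : δ < 1)
    (hdec : ∀ k : ℕ,
      F k - F (k + 1) ≥ (1 / 4) * (L (k + 1) * a (k + 1) ^ 2 - δ ^ 2 * L k * a k ^ 2)) :
    Summable (fun k => a k ^ 2) ∧
      ∑' k, a k ^ 2 ≤ 4 * (F 0 - ⨅ k, F k) / (ℓ * (1 - δ ^ 2)) :=
  square_summable_of_sufficient_decrease_general F a L ℓ Lbar δ hbdd ha0 hℓ hL hδ0 hδ1 hdec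
end

section
/- Let s ≥ 1 and N ≥ 1 be integers. For each i ∈ {1,…,s}, let (A_{i,j})_{j≥0} and (α_{i,j})_{j≥0} be nonnegative real sequences with 0 < α̲ ≤ α_{i,j} ≤ ᾱ < ∞ for all i, j, let (B_m)_{m≥0} be a nonnegative real sequence, let 0 ≤ β < 1, and for each i let (n_{i,m})_{m≥0} be a nondecreasing sequence of nonnegative integers with n_{i,m+1} ≤ n_{i,m} + N for all m and with n_{i,m} → ∞ as m → ∞. Suppose that for every m ≥ 1 one has ∑_{i=1}^s ∑_{j=n_{i,m}+1}^{n_{i,m+1}} (α_{i,j} A_{i,j}² − α_{i,j−1} β² A_{i,j−1}²) ≤ B_m · ∑_{i=1}^s ∑_{j=n_{i,m−1}+1}^{n_{i,m}} A_{i,j}, and that ∑_{m=1}^∞ B_m < ∞. Then for every i ∈ {1,…,s}, the series ∑_{j=1}^∞ A_{i,j} converges. -/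
open Finset

/-!
Let `P_k = ∑ᵢ ∑_{j ∈ (n_{i,k}, n_{i,k+1}]} A_{i,j}` be the mass of the `k`-th block and
`E_k(i) = α_{i,n_{i,k}} A_{i,n_{i,k}}²` the energy at the point `n_{i,k}`. Summed over a block, the
hypothesis telescopes: only the indices `i ∈ S` whose block is nonempty change their endpoint
energy, on `S` the energy contracts by the factor `ρ = β²` up to the error `b = B_m P_{m-1}`, and by
Cauchy–Schwarz `P_m²` is bounded by that contracted energy plus `b`, up to a constant.

The energy on `S` may be a negligible part of the total, so `√(∑ᵢ E(i))` does not decrease enough.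
The potential `Φ(E) = ∑_T η^{|T|} √(∑_{i ∈ T} E(i))` over all sets of indices, with `η` large,
does: each step lowers it by at least `√(∑_{i ∈ S} E(i)) - C √b`. Hence
`∑_m P_m ≤ C' (1 + ∑_m √(B_m P_{m-1}))`, and `√(B_m P_{m-1}) ≤ ε P_{m-1} + B_m / (4ε)` with `ε`
small bounds the partial sums of `P`.
-/

namespace Real

lemma sqrt_add_le_sqrt_add_sqrt {x y : ℝ} (hx : 0 ≤ x) (hy : 0 ≤ y) : √(x + y) ≤ √x + √y := by
  rw [sqrt_le_left (by positivity), add_sq, sq_sqrt hx, sq_sqrt hy]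
  nlinarith [sqrt_nonneg x, sqrt_nonneg y]

lemma sqrt_sub_sqrt_le_div {y z : ℝ} (hy : 0 ≤ y) (hyz : y ≤ z) : √z - √y ≤ (z - y) / √z := by
  rcases (sqrt_nonneg z).eq_or_lt with hz | hz
  · rw [← hz, div_zero]
    linarith [sqrt_nonneg y]
  · rw [le_div_iff₀ hz]
    nlinarith [sq_sqrt hy, sq_sqrt (hy.trans hyz), sqrt_le_sqrt hyz, sqrt_nonneg y]

lemma div_two_mul_sqrt_le_sqrt_sub_sqrt {y z : ℝ} (hy : 0 ≤ y) (hyz : y ≤ z) :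
    (z - y) / (2 * √z) ≤ √z - √y := by
  rcases (sqrt_nonneg z).eq_or_lt with hz | hz
  · rw [← hz, mul_zero, div_zero]
    linarith [sqrt_le_sqrt hyz]
  · rw [div_le_iff₀ (by positivity)]
    nlinarith [sq_sqrt hy, sq_sqrt (hy.trans hyz), sq_nonneg (√z - √y)]

lemma one_sub_div_two_mul_sqrt_le_sqrt_sub_sqrt {y z ρ : ℝ} (hρ : 0 ≤ ρ) (hyz : y ≤ ρ * z) :
    (1 - ρ) / 2 * √z ≤ √z - √y := by
  have h : √y ≤ √ρ * √z := by
    rw [← sqrt_mul hρ]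
    exact sqrt_le_sqrt hyz
  rw [← sq_sqrt hρ]
  nlinarith [mul_nonneg (sq_nonneg (√ρ - 1)) (sqrt_nonneg z)]

end Real

section ModifiedOnSubset

variable {ι : Type*} [DecidableEq ι] {S : Finset ι} {u v : ι → ℝ}

lemma sum_sub_sum_eq_of_subset (hoff : ∀ i ∉ S, v i = u i) {U : Finset ι} (hSU : S ⊆ U) :
    ∑ i ∈ U, u i - ∑ i ∈ U, v i = ∑ i ∈ S, u i - ∑ i ∈ S, v i := by
  rw [← sum_sdiff hSU (f := u), ← sum_sdiff hSU (f := v),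
    sum_congr rfl fun i hi => hoff i (mem_sdiff.1 hi).2]
  ring

lemma sum_union_le_add_of_nonneg (hu : 0 ≤ u) (T : Finset ι) :
    ∑ i ∈ T ∪ S, u i ≤ ∑ i ∈ T, u i + ∑ i ∈ S, u i := by
  rw [← sum_union_inter]
  linarith [sum_nonneg fun i (_ : i ∈ T ∩ S) => hu i]

lemma sqrt_sub_sqrt_le_of_contraction {ρ : ℝ} (hρ : ρ < 1) (hu : 0 ≤ u) (hv : 0 ≤ v)
    (hoff : ∀ i ∉ S, v i = u i) (hpos : 0 < ∑ i ∈ S, u i)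
    (hS : ∑ i ∈ S, v i ≤ ρ * ∑ i ∈ S, u i) (T : Finset ι) :
    √(∑ i ∈ T, v i) - √(∑ i ∈ T, u i) ≤
      2 / (1 - ρ) * (√(∑ i ∈ T ∪ S, u i) - √(∑ i ∈ T ∪ S, v i)) := by
  set a := ∑ i ∈ S, u i
  set x := ∑ i ∈ T ∪ S, u i
  set y := ∑ i ∈ T, u i
  have h1ρ : 0 < 1 - ρ := by linarith
  have hy : 0 ≤ y := sum_nonneg fun i _ => hu i
  have hvS : 0 ≤ ∑ i ∈ S, v i := sum_nonneg fun i _ => hv i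
  have hgap : (1 - ρ) * a ≤ a - ∑ i ∈ S, v i := by linarith
  have hvSa : ∑ i ∈ S, v i ≤ a := by nlinarith
  have hxv : ∑ i ∈ T ∪ S, v i = x - (a - ∑ i ∈ S, v i) := by
    linarith [sum_sub_sum_eq_of_subset hoff (subset_union_right (s₁ := T))]
  have hxa : x ≤ y + a := sum_union_le_add_of_nonneg hu T
  have hvT : ∑ i ∈ T, v i ≤ y + a := by
    have := sum_le_sum_of_subset_of_nonneg (subset_union_left : T ⊆ T ∪ S) fun i _ _ => hv i
    linarith
  have hsx : 0 < √x := Real.sqrt_pos.2 <| hpos.trans_le <|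
    sum_le_sum_of_subset_of_nonneg subset_union_right fun i _ _ => hu i
  calc √(∑ i ∈ T, v i) - √y ≤ √(y + a) - √y := by gcongr
    _ ≤ (y + a - y) / √(y + a) := Real.sqrt_sub_sqrt_le_div hy (by linarith)
    _ = a / √(y + a) := by ring
    _ ≤ a / √x := div_le_div_of_nonneg_left hpos.le hsx (Real.sqrt_le_sqrt hxa)
    _ = 2 / (1 - ρ) * ((1 - ρ) * a / (2 * √x)) := by field_simp
    _ ≤ 2 / (1 - ρ) * ((a - ∑ i ∈ S, v i) / (2 * √x)) := by gcongr
    _ = 2 / (1 - ρ) * ((x - ∑ i ∈ T ∪ S, v i) / (2 * √x)) := by rw [hxv, sub_sub_cancel]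
    _ ≤ 2 / (1 - ρ) * (√x - √(∑ i ∈ T ∪ S, v i)) := by
        gcongr
        exact Real.div_two_mul_sqrt_le_sqrt_sub_sqrt (sum_nonneg fun i _ => hv i) (by linarith)

end ModifiedOnSubset

section SqrtPotential

variable {ι : Type*} [Fintype ι]

noncomputable def sqrtPotential (η : ℝ) (u : ι → ℝ) : ℝ :=
  ∑ T : Finset ι, η ^ T.card * √(∑ i ∈ T, u i)

lemma sqrtPotential_nonneg {η : ℝ} (hη : 0 ≤ η) (u : ι → ℝ) : 0 ≤ sqrtPotential η u :=
  sum_nonneg fun _ _ => mul_nonneg (pow_nonneg hη _) (Real.sqrt_nonneg _)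

lemma sqrtPotential_add_le {η : ℝ} (hη : 0 ≤ η) {u v : ι → ℝ} (hu : 0 ≤ u) (hv : 0 ≤ v) :
    sqrtPotential η (u + v) ≤ sqrtPotential η u + sqrtPotential η v := by
  unfold sqrtPotential
  rw [← sum_add_distrib]
  gcongr with T
  rw [← mul_add]
  gcongr
  simp only [Pi.add_apply, sum_add_distrib]
  exact Real.sqrt_add_le_sqrt_add_sqrt (sum_nonneg fun i _ => hu i) (sum_nonneg fun i _ => hv i)

lemma sqrtPotential_le_of_sum_le {η b : ℝ} (hη : 0 ≤ η) {u : ι → ℝ} (hu : 0 ≤ u)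
    (hb : ∑ i, u i ≤ b) : sqrtPotential η u ≤ (η + 1) ^ Fintype.card ι * √b := by
  calc sqrtPotential η u ≤ ∑ T : Finset ι, η ^ T.card * √b := by
        unfold sqrtPotential
        gcongr with T
        exact (sum_le_univ_sum_of_nonneg hu).trans hb
    _ = (η + 1) ^ Fintype.card ι * √b := by
        rw [← sum_mul, ← Fintype.sum_pow_mul_eq_add_pow]
        simp

/- With `g T` the decrease of `√(∑ i ∈ T, ·)`, a loss on `T ⊉ S` is paid for by the gain on the
strictly larger set `T ∪ S`, which carries an extra factor `η`. -/
lemma pow_card_mul_le_two_mul_sum [DecidableEq ι] {g : Finset ι → ℝ} {S : Finset ι} {c η : ℝ}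
    (hη : 1 ≤ η) (hc : 0 ≤ c) (hcη : 2 * 2 ^ Fintype.card ι * c ≤ η)
    (hsup : ∀ U, S ⊆ U → 0 ≤ g U) (hneg : ∀ T, -g T ≤ c * g (T ∪ S)) :
    η ^ S.card * g S ≤ 2 * ∑ T, η ^ T.card * g T := by
  set G := ∑ U with S ⊆ U, η ^ U.card * g U
  have hG : ∀ U, S ⊆ U → η ^ U.card * g U ≤ G := fun U hU =>
    single_le_sum (fun V hV => mul_nonneg (pow_nonneg (by linarith) _) (hsup V (mem_filter.1 hV).2))
      (mem_filter.2 ⟨mem_univ U, hU⟩)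
  have hG0 : 0 ≤ G := (mul_nonneg (pow_nonneg (by linarith) _) (hsup S subset_rfl)).trans
    (hG S subset_rfl)
  have hbad : ∀ T ∈ univ.filter fun T => ¬ S ⊆ T, η * -(η ^ T.card * g T) ≤ c * G := by
    intro T hT
    have hTS : T ⊂ T ∪ S := subset_union_left.ssubset_of_ne fun h =>
      (mem_filter.1 hT).2 (union_eq_left.1 h.symm)
    calc η * -(η ^ T.card * g T) = η ^ (T.card + 1) * -g T := by ring
      _ ≤ η ^ (T.card + 1) * (c * g (T ∪ S)) := by gcongr; exact hneg T
      _ ≤ η ^ (T ∪ S).card * (c * g (T ∪ S)) := by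
          gcongr
          · exact mul_nonneg hc (hsup _ subset_union_right)
          · exact card_lt_card hTS
      _ = c * (η ^ (T ∪ S).card * g (T ∪ S)) := by ring
      _ ≤ c * G := by gcongr; exact hG _ subset_union_right
  have hbad_sum : η * -∑ T with ¬ S ⊆ T, η ^ T.card * g T ≤ η * (G / 2) := by
    rw [← sum_neg_distrib, mul_sum]
    calc ∑ T with ¬ S ⊆ T, η * -(η ^ T.card * g T)
        ≤ (univ.filter fun T => ¬ S ⊆ T).card • (c * G) := sum_le_card_nsmul _ _ _ hbad
      _ ≤ (2 : ℝ) ^ Fintype.card ι * (c * G) := by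
          rw [nsmul_eq_mul]
          gcongr
          exact_mod_cast (card_filter_le _ _).trans_eq Fintype.card_finset
      _ ≤ η * (G / 2) := by nlinarith
  have := le_of_mul_le_mul_left hbad_sum (by linarith)
  rw [← sum_filter_add_sum_filter_not univ (fun T => S ⊆ T)]
  linarith [hG S subset_rfl]

variable {ρ η : ℝ} {u v : ι → ℝ} {S : Finset ι}

lemma sqrtPotential_add_sqrt_le (hρ0 : 0 ≤ ρ) (hρ1 : ρ < 1)
    (hη : 2 ^ (Fintype.card ι + 2) ≤ (1 - ρ) * η) (hu : 0 ≤ u) (hv : 0 ≤ v)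
    (hoff : ∀ i ∉ S, v i = u i) (hS : ∑ i ∈ S, v i ≤ ρ * ∑ i ∈ S, u i) :
    sqrtPotential η v + √(∑ i ∈ S, u i) ≤ sqrtPotential η u := by
  classical
  have hvS : 0 ≤ ∑ i ∈ S, v i := sum_nonneg fun i _ => hv i
  rcases (sum_nonneg fun i _ => hu i : 0 ≤ ∑ i ∈ S, u i).eq_or_lt with ha | ha
  · have hvu : v = u := funext fun i => by
      by_cases hi : i ∈ S
      · rw [(sum_eq_zero_iff_of_nonneg fun i _ => hu i).1 ha.symm i hi,
          (sum_eq_zero_iff_of_nonneg fun i _ => hv i).1 (by rw [← ha] at hS; linarith) i hi]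
      · exact hoff i hi
    rw [hvu, ← ha, Real.sqrt_zero, add_zero]
  set a := ∑ i ∈ S, u i
  have hvSa : ∑ i ∈ S, v i ≤ a := by nlinarith
  have h1ρ : 0 < 1 - ρ := by linarith
  have h4η : 4 ≤ (1 - ρ) * η := calc
    (4 : ℝ) = 2 ^ 2 := by norm_num
    _ ≤ 2 ^ (Fintype.card ι + 2) := pow_le_pow_right₀ one_le_two (Nat.le_add_left 2 _)
    _ ≤ (1 - ρ) * η := hη
  have hη1 : 1 ≤ η := by nlinarith
  set g : Finset ι → ℝ := fun T => √(∑ i ∈ T, u i) - √(∑ i ∈ T, v i)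
  have hsup : ∀ U, S ⊆ U → 0 ≤ g U := fun U hU => sub_nonneg.2 <| Real.sqrt_le_sqrt <| by
    linarith [sum_sub_sum_eq_of_subset hoff hU]
  have hneg : ∀ T, -g T ≤ 2 / (1 - ρ) * g (T ∪ S) := fun T => by
    simpa only [g, neg_sub] using sqrt_sub_sqrt_le_of_contraction hρ1 hu hv hoff ha hS T
  have hcη : 2 * 2 ^ Fintype.card ι * (2 / (1 - ρ)) ≤ η := by
    rw [show 2 * 2 ^ Fintype.card ι * (2 / (1 - ρ)) = 2 ^ (Fintype.card ι + 2) / (1 - ρ) by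
      rw [pow_add]; ring, div_le_iff₀ h1ρ]
    linarith
  have hdrop := pow_card_mul_le_two_mul_sum hη1 (by positivity) hcη hsup hneg
  have hgS : (1 - ρ) / 2 * √a ≤ g S := Real.one_sub_div_two_mul_sqrt_le_sqrt_sub_sqrt hρ0 hS
  have hηS : η ≤ η ^ S.card :=
    le_self_pow₀ hη1 (card_ne_zero.2 (nonempty_of_sum_ne_zero ha.ne'))
  have hsum : sqrtPotential η u - sqrtPotential η v = ∑ T, η ^ T.card * g T := by
    simp only [sqrtPotential, g, ← sum_sub_distrib, mul_sub]
  calc sqrtPotential η v + √a ≤ sqrtPotential η v + (1 - ρ) * η / 4 * √a := by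
        gcongr
        exact le_mul_of_one_le_left (Real.sqrt_nonneg a) (by linarith)
    _ = sqrtPotential η v + η / 2 * ((1 - ρ) / 2 * √a) := by ring
    _ ≤ sqrtPotential η v + η ^ S.card / 2 * g S := by gcongr
    _ ≤ sqrtPotential η u := by linarith

lemma sqrtPotential_add_sqrt_le_add {b : ℝ} (hρ0 : 0 ≤ ρ) (hρ1 : ρ < 1)
    (hη : 2 ^ (Fintype.card ι + 2) ≤ (1 - ρ) * η) (hu : 0 ≤ u) (hv : 0 ≤ v)
    (hoff : ∀ i ∉ S, v i = u i) (hS : ∑ i ∈ S, v i ≤ ρ * ∑ i ∈ S, u i + b) :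
    sqrtPotential η v + √(∑ i ∈ S, u i) ≤ sqrtPotential η u + (η + 1) ^ Fintype.card ι * √b := by
  classical
  have hη0 : 0 ≤ η :=
    nonneg_of_mul_nonneg_right ((pow_nonneg zero_le_two _).trans hη) (by linarith)
  by_cases hS' : ∑ i ∈ S, v i ≤ ρ * ∑ i ∈ S, u i
  · linarith [sqrtPotential_add_sqrt_le hρ0 hρ1 hη hu hv hoff hS',
      mul_nonneg (pow_nonneg (by linarith : (0 : ℝ) ≤ η + 1) (Fintype.card ι)) (Real.sqrt_nonneg b)]
  -- Scale `v` down on `S` to the exact contraction; the removed part has total mass at most `b`.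
  rw [not_le] at hS'
  have hvS : 0 < ∑ i ∈ S, v i :=
    lt_of_le_of_lt (mul_nonneg hρ0 (sum_nonneg fun i _ => hu i)) hS'
  set t := (ρ * ∑ i ∈ S, u i) / ∑ i ∈ S, v i
  have ht0 : 0 ≤ t := div_nonneg (mul_nonneg hρ0 (sum_nonneg fun i _ => hu i)) hvS.le
  have ht1 : t ≤ 1 := by rw [div_le_one hvS]; exact hS'.le
  set v' : ι → ℝ := fun i => if i ∈ S then t * v i else v i
  set w : ι → ℝ := fun i => if i ∈ S then (1 - t) * v i else 0
  have hvw : v = v' + w := funext fun i => by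
    simp only [v', w, Pi.add_apply]; split_ifs <;> ring
  have hv' : 0 ≤ v' := fun i => by
    simp only [v']; split_ifs
    · exact mul_nonneg ht0 (hv i)
    · exact hv i
  have hw : 0 ≤ w := fun i => by
    simp only [w]; split_ifs
    · exact mul_nonneg (by linarith) (hv i)
    · exact le_rfl
  have hoff' : ∀ i ∉ S, v' i = u i := fun i hi => by simp only [v', if_neg hi, hoff i hi]
  have hSv' : ∑ i ∈ S, v' i = ρ * ∑ i ∈ S, u i := by
    rw [sum_congr rfl fun i hi => if_pos hi, ← mul_sum, div_mul_cancel₀ _ hvS.ne']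
  have hw_sum : ∑ i, w i ≤ b := by
    rw [sum_ite_mem, univ_inter, ← mul_sum, sub_mul, one_mul, div_mul_cancel₀ _ hvS.ne']
    linarith
  calc sqrtPotential η v + √(∑ i ∈ S, u i)
      ≤ sqrtPotential η v' + sqrtPotential η w + √(∑ i ∈ S, u i) := by
        rw [hvw]; gcongr; exact sqrtPotential_add_le hη0 hv' hw
    _ ≤ sqrtPotential η u + (η + 1) ^ Fintype.card ι * √b := by
        linarith [sqrtPotential_add_sqrt_le hρ0 hρ1 hη hu hv' hoff' hSv'.le,
          sqrtPotential_le_of_sum_le hη0 hw hw_sum]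

theorem sum_range_sqrt_le_sqrtPotential {E : ℕ → ι → ℝ} {S : ℕ → Finset ι} {b : ℕ → ℝ}
    (hρ0 : 0 ≤ ρ) (hρ1 : ρ < 1) (hη : 2 ^ (Fintype.card ι + 2) ≤ (1 - ρ) * η)
    (hE : ∀ m, 0 ≤ E m) (hoff : ∀ k, ∀ i ∉ S k, E (k + 1) i = E k i)
    (hS : ∀ k, ∑ i ∈ S k, E (k + 1) i ≤ ρ * ∑ i ∈ S k, E k i + b k) (M : ℕ) :
    ∑ k ∈ range M, √(∑ i ∈ S k, E k i) ≤
      sqrtPotential η (E 0) + (η + 1) ^ Fintype.card ι * ∑ k ∈ range M, √(b k) := by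
  have hη0 : 0 ≤ η :=
    nonneg_of_mul_nonneg_right ((pow_nonneg zero_le_two _).trans hη) (by linarith)
  calc ∑ k ∈ range M, √(∑ i ∈ S k, E k i)
      ≤ ∑ k ∈ range M, (sqrtPotential η (E k) - sqrtPotential η (E (k + 1))
          + (η + 1) ^ Fintype.card ι * √(b k)) := by
        gcongr with k
        linarith [sqrtPotential_add_sqrt_le_add hρ0 hρ1 hη (hE k) (hE (k + 1)) (hoff k) (hS k)]
    _ = sqrtPotential η (E 0) - sqrtPotential η (E M)
          + (η + 1) ^ Fintype.card ι * ∑ k ∈ range M, √(b k) := by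
        rw [sum_add_distrib, sum_range_sub' (fun k => sqrtPotential η (E k)), mul_sum]
    _ ≤ _ := by linarith [sqrtPotential_nonneg hη0 (E M)]

end SqrtPotential

lemma summable_of_sum_range_succ_le_sqrt {P B : ℕ → ℝ} {C D : ℝ} (hP : ∀ k, 0 ≤ P k)
    (hB : ∀ k, 0 ≤ B k) (hBsum : Summable B)
    (h : ∀ M, ∑ k ∈ range M, P (k + 1) ≤ C + D * ∑ k ∈ range M, √(B k * P k)) :
    Summable P := by
  have amgm : ∀ k, D * √(B k * P k) ≤ D ^ 2 * B k / 2 + P k / 2 := fun k => by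
    have := two_mul_le_add_sq (D * √(B k)) (√(P k))
    rw [mul_pow, Real.sq_sqrt (hB k), Real.sq_sqrt (hP k)] at this
    rw [Real.sqrt_mul (hB k)]
    linarith
  have hmono : ∀ M, ∑ k ∈ range M, P k ≤ ∑ k ∈ range (M + 1), P k := fun M =>
    sum_le_sum_of_subset_of_nonneg (range_subset_range.2 M.le_succ) fun k _ _ => hP k
  refine summable_of_sum_range_le hP (c := 2 * (P 0 + C + D ^ 2 / 2 * ∑' k, B k)) fun M => ?_
  have hB_le : D ^ 2 / 2 * ∑ k ∈ range M, B k ≤ D ^ 2 / 2 * ∑' k, B k := by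
    gcongr
    exact hBsum.sum_le_tsum _ fun k _ => hB k
  have h_amgm : D * ∑ k ∈ range M, √(B k * P k) ≤
      D ^ 2 / 2 * ∑ k ∈ range M, B k + (∑ k ∈ range M, P k) / 2 := by
    rw [mul_sum, mul_sum, sum_div, ← sum_add_distrib]
    gcongr with k
    linarith [amgm k]
  linarith [h M, sum_range_succ' P M, hmono M]

section EnergyRecursion

variable {ι : Type*} [Fintype ι] {ρ K : ℝ} {P V B : ℕ → ℝ} {E : ℕ → ι → ℝ} {S : ℕ → Finset ι}

theorem summable_of_active_energy (hρ0 : 0 ≤ ρ) (hρ1 : ρ < 1) (hK : 0 ≤ K)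
    (hP : ∀ k, 0 ≤ P k) (hB : ∀ k, 0 ≤ B k) (hBsum : Summable B) (hE : ∀ m, 0 ≤ E m)
    (hoff : ∀ k, ∀ i ∉ S k, E (k + 1) i = E k i)
    (hS : ∀ k, ∑ i ∈ S k, E (k + 1) i ≤ ρ * ∑ i ∈ S k, E k i + B k * P k)
    (hPE : ∀ k, P (k + 1) ^ 2 ≤ K * (∑ i ∈ S k, E k i + B k * P k)) :
    Summable P := by
  have hPk : ∀ k, P (k + 1) ≤ √K * (√(∑ i ∈ S k, E k i) + √(B k * P k)) := fun k => by
    rw [← Real.sqrt_sq (hP (k + 1))]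
    calc √(P (k + 1) ^ 2) ≤ √(K * (∑ i ∈ S k, E k i + B k * P k)) := Real.sqrt_le_sqrt (hPE k)
      _ = √K * √(∑ i ∈ S k, E k i + B k * P k) := Real.sqrt_mul hK _
      _ ≤ √K * (√(∑ i ∈ S k, E k i) + √(B k * P k)) := by
          gcongr
          exact Real.sqrt_add_le_sqrt_add_sqrt (sum_nonneg fun i _ => hE k i)
            (mul_nonneg (hB k) (hP k))
  set η := 2 ^ (Fintype.card ι + 2) / (1 - ρ)
  have hη : 2 ^ (Fintype.card ι + 2) ≤ (1 - ρ) * η := by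
    rw [mul_div_cancel₀ _ (by linarith)]
  refine summable_of_sum_range_succ_le_sqrt hP hB hBsum
    (C := √K * sqrtPotential η (E 0)) (D := √K * ((η + 1) ^ Fintype.card ι + 1)) fun M => ?_
  calc ∑ k ∈ range M, P (k + 1)
      ≤ ∑ k ∈ range M, √K * (√(∑ i ∈ S k, E k i) + √(B k * P k)) := sum_le_sum fun k _ => hPk k
    _ = √K * (∑ k ∈ range M, √(∑ i ∈ S k, E k i) + ∑ k ∈ range M, √(B k * P k)) := by
        rw [← mul_sum, sum_add_distrib]
    _ ≤ √K * (sqrtPotential η (E 0) + (η + 1) ^ Fintype.card ι * ∑ k ∈ range M, √(B k * P k)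
          + ∑ k ∈ range M, √(B k * P k)) := by
        gcongr
        exact sum_range_sqrt_le_sqrtPotential hρ0 hρ1 hη hE hoff hS M
    _ = _ := by ring

theorem summable_of_energy_recursion (hρ0 : 0 ≤ ρ) (hρ1 : ρ < 1) (hK : 0 ≤ K)
    (hP : ∀ k, 0 ≤ P k) (hB : ∀ k, 0 ≤ B k) (hBsum : Summable B) (hE : ∀ m, 0 ≤ E m)
    (hoff : ∀ k, ∀ i ∉ S k, E (k + 1) i = E k i)
    (hPV : ∀ k, P (k + 1) ^ 2 ≤ K * V (k + 1))
    (hEV : ∀ k, ∑ i ∈ S k, E (k + 1) i ≤ V (k + 1))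
    (hrec : ∀ k, (1 - ρ) * V (k + 1) + ρ * (∑ i ∈ S k, E (k + 1) i - ∑ i ∈ S k, E k i) ≤
      B k * P k) :
    Summable P := by
  have hE_sum : ∀ m k, 0 ≤ ∑ i ∈ S k, E m i := fun m k => sum_nonneg fun i _ => hE m i
  refine summable_of_active_energy hρ0 hρ1 (div_nonneg hK (by linarith : 0 ≤ 1 - ρ))
    hP hB hBsum hE hoff (fun k => ?_) (fun k => ?_)
  · nlinarith [hrec k, mul_le_mul_of_nonneg_left (hEV k) (by linarith : 0 ≤ 1 - ρ)]
  · have hV : V (k + 1) ≤ (∑ i ∈ S k, E k i + B k * P k) / (1 - ρ) := by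
      rw [le_div_iff₀ (by linarith), mul_comm]
      nlinarith [hrec k, mul_nonneg hρ0 (hE_sum (k + 1) k),
        mul_le_of_le_one_left (hE_sum k k) hρ1.le]
    calc P (k + 1) ^ 2 ≤ K * V (k + 1) := hPV k
      _ ≤ K * ((∑ i ∈ S k, E k i + B k * P k) / (1 - ρ)) := by gcongr
      _ = K / (1 - ρ) * (∑ i ∈ S k, E k i + B k * P k) := by ring

end EnergyRecursion

lemma sum_Ioc_sub_mul_pred (f : ℕ → ℝ) (c : ℝ) {p q : ℕ} (hpq : p ≤ q) :
    ∑ j ∈ Ioc p q, (f j - c * f (j - 1)) = (1 - c) * ∑ j ∈ Ioc p q, f j + c * (f q - f p) := by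
  induction q, hpq using Nat.le_induction with
  | base => simp
  | succ q hpq ih =>
    rw [sum_Ioc_succ_top hpq, sum_Ioc_succ_top hpq, ih, Nat.add_sub_cancel]
    ring

lemma summable_of_summable_sum_Ioc {f : ℕ → ℝ} {n : ℕ → ℕ} (hf : ∀ j, 0 ≤ f j)
    (hn : Monotone n) (htends : Filter.Tendsto n Filter.atTop Filter.atTop)
    (h : Summable fun k => ∑ j ∈ Ioc (n k) (n (k + 1)), f j) : Summable f := by
  have hblocks (M : ℕ) :
      ∑ j ∈ Ioc (n 0) (n M), f j = ∑ k ∈ range M, ∑ j ∈ Ioc (n k) (n (k + 1)), f j := by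
    induction M with
    | zero => simp
    | succ M ih => rw [sum_range_succ, ← ih, sum_Ioc_consecutive _ (hn M.zero_le) (hn M.le_succ)]
  refine summable_of_sum_range_le hf
    (c := ∑ j ∈ range (n 0 + 1), f j + ∑' k, ∑ j ∈ Ioc (n k) (n (k + 1)), f j) fun J => ?_
  obtain ⟨M, hM⟩ := (htends.eventually_ge_atTop J).exists
  calc ∑ j ∈ range J, f j ≤ ∑ j ∈ range (n M + 1), f j :=
        sum_le_sum_of_subset_of_nonneg (range_subset_range.2 (Nat.le_succ_of_le hM))
          fun j _ _ => hf j
    _ = ∑ j ∈ range (n 0 + 1), f j + ∑ k ∈ range M, ∑ j ∈ Ioc (n k) (n (k + 1)), f j := by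
        rw [← sum_range_add_sum_Ico f (Nat.add_le_add_right (hn M.zero_le) 1),
          Ico_add_one_add_one_eq_Ioc, hblocks]
    _ ≤ _ := by
        gcongr
        exact h.sum_le_tsum _ fun k _ => sum_nonneg fun j _ => hf j

section Blocks

variable {ι : Type*} [Fintype ι]

noncomputable def blockSum (n : ι → ℕ → ℕ) (f : ι → ℕ → ℝ) (k : ℕ) : ℝ :=
  ∑ i, ∑ j ∈ Ioc (n i k) (n i (k + 1)), f i j

def nonemptyBlocks (n : ι → ℕ → ℕ) (k : ℕ) : Finset ι :=
  {i | n i (k + 1) ≠ n i k}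

variable {n : ι → ℕ → ℕ}

lemma blockSum_sub_mul_pred (hn : ∀ i, Monotone (n i)) (f : ι → ℕ → ℝ) (c : ℝ) (k : ℕ) :
    blockSum n (fun i j => f i j - c * f i (j - 1)) k = (1 - c) * blockSum n f k +
      c * (∑ i ∈ nonemptyBlocks n k, f i (n i (k + 1)) -
        ∑ i ∈ nonemptyBlocks n k, f i (n i k)) := by
  have hnonempty : ∑ i ∈ nonemptyBlocks n k, (f i (n i (k + 1)) - f i (n i k)) =
      ∑ i, (f i (n i (k + 1)) - f i (n i k)) :=
    sum_filter_of_ne fun i _ hi h => hi (by rw [h, sub_self])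
  rw [← sum_sub_distrib, hnonempty, blockSum, blockSum,
    sum_congr rfl fun i _ => sum_Ioc_sub_mul_pred (f i) c (hn i k.le_succ), sum_add_distrib,
    ← mul_sum, ← mul_sum]

lemma sum_nonemptyBlocks_le_blockSum (hn : ∀ i, Monotone (n i)) {f : ι → ℕ → ℝ}
    (hf : ∀ i j, 0 ≤ f i j) (k : ℕ) :
    ∑ i ∈ nonemptyBlocks n k, f i (n i (k + 1)) ≤ blockSum n f k := by
  calc ∑ i ∈ nonemptyBlocks n k, f i (n i (k + 1))
      ≤ ∑ i ∈ nonemptyBlocks n k, ∑ j ∈ Ioc (n i k) (n i (k + 1)), f i j := by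
        refine sum_le_sum fun i hi => single_le_sum (fun j _ => hf i j) (right_mem_Ioc.2 ?_)
        exact (hn i k.le_succ).lt_of_ne (mem_filter.1 hi).2.symm
    _ ≤ blockSum n f k :=
        sum_le_sum_of_subset_of_nonneg (subset_univ _) fun i _ _ => sum_nonneg fun j _ => hf i j

lemma sq_blockSum_le {N : ℕ} (hN : ∀ i k, n i (k + 1) ≤ n i k + N) {a : ℝ} (ha : 0 < a)
    {α : ι → ℕ → ℝ} (hα : ∀ i j, a ≤ α i j) (A : ι → ℕ → ℝ) (k : ℕ) :
    blockSum n A k ^ 2 ≤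
      Fintype.card ι * N / a * blockSum n (fun i j => α i j * A i j ^ 2) k := by
  have hcs := sq_sum_le_card_mul_sum_sq (s := univ.sigma fun i => Ioc (n i k) (n i (k + 1)))
    (f := fun p => A p.1 p.2)
  rw [sum_sigma, sum_sigma, card_sigma] at hcs
  have hcard : ((∑ i, #(Ioc (n i k) (n i (k + 1))) : ℕ) : ℝ) ≤ Fintype.card ι * N := by
    norm_cast
    calc ∑ i, #(Ioc (n i k) (n i (k + 1))) ≤ ∑ _i : ι, N :=
          sum_le_sum fun i _ => by rw [Nat.card_Ioc]; have := hN i k; omega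
      _ = Fintype.card ι * N := by simp
  have hsq : ∑ i, ∑ j ∈ Ioc (n i k) (n i (k + 1)), A i j ^ 2 ≤
      blockSum n (fun i j => α i j * A i j ^ 2) k / a := by
    rw [blockSum, le_div_iff₀ ha, sum_mul]
    refine sum_le_sum fun i _ => ?_
    rw [sum_mul]
    exact sum_le_sum fun j _ => by nlinarith [hα i j, sq_nonneg (A i j)]
  calc blockSum n A k ^ 2
      ≤ ((∑ i, #(Ioc (n i k) (n i (k + 1))) : ℕ) : ℝ) *
          ∑ i, ∑ j ∈ Ioc (n i k) (n i (k + 1)), A i j ^ 2 := hcs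
    _ ≤ Fintype.card ι * N * (blockSum n (fun i j => α i j * A i j ^ 2) k / a) := by
        gcongr
    _ = _ := by ring

end Blocks

theorem seq_lemma_summable_general
    (s N : ℕ)
    (A α : Fin s → ℕ → ℝ) (B : ℕ → ℝ) (alow aup β : ℝ)
    (hA : ∀ i j, 0 ≤ A i j) (hB : ∀ m, 0 ≤ B m)
    (halow : 0 < alow) (hbounds : ∀ i j, alow ≤ α i j ∧ α i j ≤ aup)
    (hβ0 : 0 ≤ β) (hβ1 : β < 1)
    (n : Fin s → ℕ → ℕ) (hmono : ∀ i, Monotone (n i))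
    (hstep : ∀ i m, n i (m + 1) ≤ n i m + N)
    (htends : ∀ i, Filter.Tendsto (n i) Filter.atTop Filter.atTop)
    (hcond : ∀ m, 1 ≤ m →
      ∑ i, ∑ j ∈ Ioc (n i m) (n i (m + 1)),
          (α i j * A i j ^ 2 - α i (j - 1) * β ^ 2 * A i (j - 1) ^ 2) ≤
        B m * ∑ i, ∑ j ∈ Ioc (n i (m - 1)) (n i m), A i j)
    (hBsum : Summable B) :
    ∀ i, Summable (fun j => A i (j + 1)) := by
  set f : Fin s → ℕ → ℝ := fun i j => α i j * A i j ^ 2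
  have hf : ∀ i j, 0 ≤ f i j := fun i j =>
    mul_nonneg (halow.le.trans (hbounds i j).1) (sq_nonneg _)
  have hrec : ∀ k, (1 - β ^ 2) * blockSum n f (k + 1) +
      β ^ 2 * (∑ i ∈ nonemptyBlocks n (k + 1), f i (n i (k + 1 + 1)) -
        ∑ i ∈ nonemptyBlocks n (k + 1), f i (n i (k + 1))) ≤ B (k + 1) * blockSum n A k := by
    intro k
    rw [← blockSum_sub_mul_pred hmono]
    have := hcond (k + 1) le_add_self
    rw [Nat.add_sub_cancel] at this
    exact le_of_eq_of_le (sum_congr rfl fun i _ => sum_congr rfl fun j _ => by ring) this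
  have hblocks : Summable (blockSum n A) :=
    summable_of_energy_recursion (sq_nonneg β) (by nlinarith) (by positivity)
      (E := fun m i => f i (n i (m + 1))) (S := fun k => nonemptyBlocks n (k + 1))
      (fun k => sum_nonneg fun i _ => sum_nonneg fun j _ => hA i j) (fun k => hB (k + 1))
      ((summable_nat_add_iff 1).2 hBsum) (fun m i => hf i _)
      (fun k i hi => congrArg (f i) (by simpa [nonemptyBlocks] using hi))
      (fun k => sq_blockSum_le hstep halow (fun i j => (hbounds i j).1) A (k + 1))
      (fun k => sum_nonemptyBlocks_le_blockSum hmono hf (k + 1)) hrec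
  intro i
  refine (summable_nat_add_iff 1).2 <|
    summable_of_summable_sum_Ioc (hA i) (hmono i) (htends i) <|
      hblocks.of_nonneg_of_le (fun k => sum_nonneg fun j _ => hA i j) fun k => ?_
  exact single_le_sum (f := fun i => ∑ j ∈ Ioc (n i k) (n i (k + 1)), A i j)
    (fun i _ => sum_nonneg fun j _ => hA i j) (mem_univ i)

/-- Lemma 2.2, summability conclusion \eqref{cau-seq}. -/
theorem seq_lemma_summable
    (s N : ℕ) (hs : 1 ≤ s) (hN : 1 ≤ N)
    (A α : Fin s → ℕ → ℝ) (B : ℕ → ℝ) (alow aup β : ℝ)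
    (hA : ∀ i j, 0 ≤ A i j) (hB : ∀ m, 0 ≤ B m)
    (halow : 0 < alow) (hbounds : ∀ i j, alow ≤ α i j ∧ α i j ≤ aup)
    (hβ0 : 0 ≤ β) (hβ1 : β < 1)
    (n : Fin s → ℕ → ℕ) (hmono : ∀ i, Monotone (n i))
    (hstep : ∀ i m, n i (m + 1) ≤ n i m + N)
    (htends : ∀ i, Filter.Tendsto (n i) Filter.atTop Filter.atTop)
    (hcond : ∀ m, 1 ≤ m →
      ∑ i, ∑ j ∈ Ioc (n i m) (n i (m + 1)),
          (α i j * A i j ^ 2 - α i (j - 1) * β ^ 2 * A i (j - 1) ^ 2) ≤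
        B m * ∑ i, ∑ j ∈ Ioc (n i (m - 1)) (n i m), A i j)
    (hBsum : Summable B) :
    ∀ i, Summable (fun j => A i (j + 1)) :=
  seq_lemma_summable_general s N A α B alow aup β hA hB halow hbounds hβ0 hβ1 n hmono hstep htends
    hcond hBsum
end

section
/- Let (A_m)_{m≥0}, (B_m)_{m≥1}, and (α_m)_{m≥0} be nonnegative real sequences with 0 < α̲ ≤ α_m ≤ ᾱ < ∞ for all m. If α_{m+1} A_{m+1}² ≤ B_m A_m for all m ≥ 1 and ∑_{m=1}^∞ B_m < ∞, then ∑_{m=1}^∞ A_m < ∞. -/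
/-! By AM-GM, `α̲ A_{m+1}² ≤ B_m A_m` gives the contraction
`A_{m+1} ≤ A_m / 2 + B_m / (2 α̲)`. Summing it, the partial sums `S` of `A` satisfy
`S ≤ A_1 + S / 2 + ∑ B_m / (2 α̲)`, so they are bounded. -/

open Finset

lemma le_half_add_half_of_sq_le_mul {x y b : ℝ} (hy : 0 ≤ y) (hb : 0 ≤ b)
    (h : x ^ 2 ≤ b * y) : x ≤ y / 2 + b / 2 := by
  have hamgm : b * y ≤ (y / 2 + b / 2) ^ 2 := by nlinarith [sq_nonneg (y - b)]
  exact le_of_sq_le_sq (h.trans hamgm) (by positivity)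

lemma sum_range_le_of_le_mul_add {a b : ℕ → ℝ} {c : ℝ} (ha : ∀ n, 0 ≤ a n) (hb : ∀ n, 0 ≤ b n)
    (hc₀ : 0 ≤ c) (hc : c < 1) (hb_sum : Summable b)
    (hrec : ∀ n, a (n + 1) ≤ c * a n + b n) (N : ℕ) :
    ∑ i ∈ range N, a i ≤ (a 0 + ∑' n, b n) / (1 - c) := by
  rw [le_div_iff₀ (by linarith)]
  cases N with
  | zero => simpa using add_nonneg (ha 0) (tsum_nonneg hb)
  | succ N =>
    have hshift : ∑ i ∈ range N, a (i + 1) ≤ c * ∑ i ∈ range N, a i + ∑ i ∈ range N, b i := by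
      rw [mul_sum, ← sum_add_distrib]
      exact sum_le_sum fun i _ => hrec i
    have hmono : ∑ i ∈ range N, a i ≤ ∑ i ∈ range (N + 1), a i :=
      sum_le_sum_of_subset_of_nonneg (range_subset_range.2 N.le_succ) fun i _ _ => ha i
    have hb_le : ∑ i ∈ range N, b i ≤ ∑' n, b n := hb_sum.sum_le_tsum _ fun i _ => hb i
    rw [sum_range_succ'] at hmono ⊢
    linarith [mul_le_mul_of_nonneg_left hmono hc₀]

lemma summable_of_le_mul_add {a b : ℕ → ℝ} {c : ℝ} (ha : ∀ n, 0 ≤ a n) (hb : ∀ n, 0 ≤ b n)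
    (hc₀ : 0 ≤ c) (hc : c < 1) (hb_sum : Summable b)
    (hrec : ∀ n, a (n + 1) ≤ c * a n + b n) : Summable a :=
  summable_of_sum_range_le ha (sum_range_le_of_le_mul_add ha hb hc₀ hc hb_sum hrec)

theorem seq_lemma_single_block_general
    (A B α : ℕ → ℝ) (alow aup : ℝ)
    (hA : ∀ m, 0 ≤ A m) (hB : ∀ m, 0 ≤ B m)
    (halow : 0 < alow) (hbounds : ∀ m, alow ≤ α m ∧ α m ≤ aup)
    (hcond : ∀ m, 1 ≤ m → α (m + 1) * A (m + 1) ^ 2 ≤ B m * A m)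
    (hBsum : Summable (fun m => B (m + 1))) :
    Summable (fun m => A (m + 1)) := by
  have hb : ∀ m, 0 ≤ B m / alow := fun m => div_nonneg (hB m) halow.le
  have hstep : ∀ m, A (m + 2) ^ 2 ≤ B (m + 1) / alow * A (m + 1) := by
    intro m
    rw [div_mul_eq_mul_div, le_div_iff₀ halow, mul_comm]
    exact (mul_le_mul_of_nonneg_right (hbounds (m + 2)).1 (sq_nonneg _)).trans
      (hcond (m + 1) (Nat.le_add_left 1 m))
  refine summable_of_le_mul_add (fun m => hA (m + 1))
    (fun m => div_nonneg (hb (m + 1)) zero_le_two) one_half_pos.le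
    one_half_lt_one ((hBsum.div_const alow).div_const 2) fun m => ?_
  linarith [le_half_add_half_of_sq_le_mul (hA _) (hb _) (hstep m)]

/-- Special case of Lemma 2.2 with one block (`s = 1`), `n_{1,m} = m`, `β = 0`. -/
theorem seq_lemma_single_block
    (A B α : ℕ → ℝ) (alow aup : ℝ)
    (hA : ∀ m, 0 ≤ A m) (hB : ∀ m, 0 ≤ B m) (hα : ∀ m, 0 ≤ α m)
    (halow : 0 < alow) (hbounds : ∀ m, alow ≤ α m ∧ α m ≤ aup)
    (hcond : ∀ m, 1 ≤ m → α (m + 1) * A (m + 1) ^ 2 ≤ B m * A m)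
    (hBsum : Summable (fun m => B (m + 1))) :
    Summable (fun m => A (m + 1)) :=
  seq_lemma_single_block_general A B α alow aup hA hB halow hbounds hcond hBsum
end

section
/- Let s ≥ 1 be an integer, and for each i ∈ {1,…,s} let (A_{i,m})_{m≥0} and (α_{i,m})_{m≥0} be nonnegative real sequences with 0 < α̲ ≤ α_{i,m} ≤ ᾱ < ∞ for all i, m, and let (B_m)_{m≥1} be a nonnegative real sequence. If ∑_{i=1}^s α_{i,m+1} A_{i,m+1}² ≤ B_m · ∑_{i=1}^s A_{i,m} for all m ≥ 1, and ∑_{m=1}^∞ B_m < ∞, then for every i ∈ {1,…,s} the series ∑_{m=1}^∞ A_{i,m} converges. -/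
open Finset

/-!
Put `S m = ∑ i, A i m`. Cauchy–Schwarz and `alow ≤ α` turn the hypothesis into
`S (m + 1) ^ 2 ≤ (s / alow) * B m * S m`, and AM–GM then gives the contraction
`S (m + 1) ≤ S m / 2 + (s / alow) * B m / 2`. Summing it bounds the partial sums of `S` by
`2 S 1 + (s / alow) ∑ B`, so `S` is summable, and each `A i ≤ S` is too.
-/

theorem summable_of_succ_le_mul_add {x g : ℕ → ℝ} {q : ℝ} (hq₀ : 0 ≤ q) (hq₁ : q < 1)
    (hx : ∀ n, 0 ≤ x n) (hg : ∀ n, 0 ≤ g n) (hgsum : Summable g)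
    (hstep : ∀ n, x (n + 1) ≤ q * x n + g n) : Summable x := by
  refine summable_of_sum_range_le hx (c := (x 0 + ∑' k, g k) / (1 - q)) fun n => ?_
  have hmono : ∑ k ∈ range n, x k ≤ ∑ k ∈ range (n + 1), x k :=
    sum_le_sum_of_subset_of_nonneg (range_subset_range.2 n.le_succ) fun k _ _ => hx k
  have hshift : ∑ k ∈ range n, x (k + 1) ≤ q * ∑ k ∈ range n, x k + ∑ k ∈ range n, g k := by
    rw [mul_sum, ← sum_add_distrib]
    exact sum_le_sum fun k _ => hstep k
  have hG : ∑ k ∈ range n, g k ≤ ∑' k, g k := hgsum.sum_le_tsum _ fun k _ => hg k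
  have hq : q * ∑ k ∈ range n, x k ≤ q * ∑ k ∈ range (n + 1), x k :=
    mul_le_mul_of_nonneg_left hmono hq₀
  rw [sum_range_succ'] at hmono hq
  rw [le_div_iff₀ (sub_pos.2 hq₁)]
  linarith [mul_le_mul_of_nonneg_right hmono (sub_nonneg.2 hq₁.le)]

theorem le_add_div_two_of_sq_le_mul {a b c : ℝ} (hb : 0 ≤ b) (hc : 0 ≤ c) (h : a ^ 2 ≤ b * c) :
    a ≤ (b + c) / 2 :=
  (abs_le_of_sq_le_sq' (h.trans (by nlinarith [four_mul_le_sq_add b c])) (by positivity)).2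

theorem summable_of_sq_succ_le_mul {x g : ℕ → ℝ} (hx : ∀ n, 0 ≤ x n) (hg : ∀ n, 0 ≤ g n)
    (hgsum : Summable g) (hstep : ∀ n, x (n + 1) ^ 2 ≤ g n * x n) : Summable x :=
  summable_of_succ_le_mul_add (q := 1 / 2) (g := fun n => g n / 2) (by norm_num) (by norm_num) hx
    (fun n => div_nonneg (hg n) zero_le_two) (hgsum.div_const 2) fun n => by
      linarith [le_add_div_two_of_sq_le_mul (hg n) (hx n) (hstep n)]

theorem sq_sum_le_card_div_mul_sum_mul_sq {ι : Type*} [Fintype ι] {x w : ι → ℝ} {a : ℝ}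
    (ha : 0 < a) (hw : ∀ i, a ≤ w i) :
    (∑ i, x i) ^ 2 ≤ Fintype.card ι / a * ∑ i, w i * x i ^ 2 := by
  have hweight : a * ∑ i, x i ^ 2 ≤ ∑ i, w i * x i ^ 2 := by
    rw [mul_sum]
    exact sum_le_sum fun i _ => mul_le_mul_of_nonneg_right (hw i) (sq_nonneg _)
  calc (∑ i, x i) ^ 2 ≤ Fintype.card ι * ∑ i, x i ^ 2 := by
        simpa using sq_sum_le_card_mul_sum_sq (s := univ) (f := x)
    _ = Fintype.card ι / a * (a * ∑ i, x i ^ 2) := by field_simp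
    _ ≤ Fintype.card ι / a * ∑ i, w i * x i ^ 2 := by gcongr

theorem seq_lemma_cyclic_blocks_general
    (s : ℕ)
    (A α : Fin s → ℕ → ℝ) (B : ℕ → ℝ) (alow aup : ℝ)
    (hA : ∀ i m, 0 ≤ A i m) (hB : ∀ m, 1 ≤ m → 0 ≤ B m)
    (halow : 0 < alow) (hbounds : ∀ i m, alow ≤ α i m ∧ α i m ≤ aup)
    (hcond : ∀ m, 1 ≤ m → ∑ i, α i (m + 1) * A i (m + 1) ^ 2 ≤ B m * ∑ i, A i m)
    (hBsum : Summable (fun m => B (m + 1))) :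
    ∀ i, Summable (fun m => A i (m + 1)) := by
  set S : ℕ → ℝ := fun m => ∑ i, A i m
  have hS : ∀ m, 0 ≤ S m := fun m => sum_nonneg fun i _ => hA i m
  have hc : 0 ≤ (s : ℝ) / alow := by positivity
  have hrec : ∀ m, S (m + 2) ^ 2 ≤ s / alow * B (m + 1) * S (m + 1) := fun m =>
    calc S (m + 2) ^ 2 ≤ s / alow * ∑ i, α i (m + 2) * A i (m + 2) ^ 2 := by
          simpa using sq_sum_le_card_div_mul_sum_mul_sq halow fun i => (hbounds i (m + 2)).1
      _ ≤ s / alow * (B (m + 1) * S (m + 1)) :=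
          mul_le_mul_of_nonneg_left (hcond (m + 1) m.succ_pos) hc
      _ = s / alow * B (m + 1) * S (m + 1) := by ring
  have hSsum : Summable fun m => S (m + 1) :=
    summable_of_sq_succ_le_mul (fun m => hS (m + 1))
      (fun m => mul_nonneg hc (hB (m + 1) m.succ_pos)) (hBsum.mul_left _) hrec
  exact fun i => hSsum.of_nonneg_of_le (fun m => hA i (m + 1))
    fun m => single_le_sum (fun j _ => hA j (m + 1)) (mem_univ i)

/-- Special case of Lemma 2.2 with `s` blocks, `n_{i,m} = m` and `β = 0`
(cyclic block prox-linear method). -/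
theorem seq_lemma_cyclic_blocks
    (s : ℕ) (hs : 1 ≤ s)
    (A α : Fin s → ℕ → ℝ) (B : ℕ → ℝ) (alow aup : ℝ)
    (hA : ∀ i m, 0 ≤ A i m) (hB : ∀ m, 1 ≤ m → 0 ≤ B m)
    (halow : 0 < alow) (hbounds : ∀ i m, alow ≤ α i m ∧ α i m ≤ aup)
    (hcond : ∀ m, 1 ≤ m → ∑ i, α i (m + 1) * A i (m + 1) ^ 2 ≤ B m * ∑ i, A i m)
    (hBsum : Summable (fun m => B (m + 1))) :
    ∀ i, Summable (fun m => A i (m + 1)) :=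
  seq_lemma_cyclic_blocks_general s A α B alow aup hA hB halow hbounds hcond hBsum
end

section
/- Let (A_k)_{k≥1} be a nonnegative real sequence and K a positive integer such that A_k ≤ A_{k−1} ≤ 1 for all k ≥ K + 1. Suppose there are positive constants α, β, γ with γ ≥ 1 such that A_k ≤ α (A_{k−1} − A_k)^γ + β (A_{k−1} − A_k) for all k ≥ K + 1. Then A_k ≤ ((α+β)/(1+α+β))^{k−K} · A_K for all k ≥ K. -/
/-! For `γ ≥ 1` and a step `d = A (k-1) - A k ∈ [0, 1]` we have `d ^ γ ≤ d`, so the hypothesis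
becomes `A k ≤ c (A (k-1) - A k)` with `c = α + β`, i.e. `A k ≤ c / (1 + c) · A (k-1)`:
the sequence contracts by a fixed factor at every step. -/

theorem le_div_one_add_mul_of_le_mul_sub {a b c : ℝ} (hc : 0 ≤ c) (h : b ≤ c * (a - b)) :
    b ≤ c / (1 + c) * a := by
  rw [div_mul_eq_mul_div, le_div_iff₀ (by linarith)]
  linarith

theorem le_pow_mul_of_le_mul_pred {u : ℕ → ℝ} {c : ℝ} (hc : 0 ≤ c) (K : ℕ)
    (h : ∀ k, K + 1 ≤ k → u k ≤ c * u (k - 1)) : ∀ k, K ≤ k → u k ≤ c ^ (k - K) * u K := by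
  intro k hk
  obtain ⟨n, rfl⟩ := Nat.exists_eq_add_of_le hk
  simpa using le_geom (u := fun i ↦ u (K + i)) hc n fun i _ ↦ by
    simpa [← add_assoc] using h (K + i + 1) (by omega)

theorem rate_lemma_linear_general
    (A : ℕ → ℝ) (K : ℕ)
    (hA : ∀ k, 0 ≤ A k)
    (hmono : ∀ k, K + 1 ≤ k → A k ≤ A (k - 1) ∧ A (k - 1) ≤ 1)
    (α β γ : ℝ) (hα : 0 < α) (hβ : 0 < β) (hγ : 1 ≤ γ)
    (hcond : ∀ k, K + 1 ≤ k → A k ≤ α * (A (k - 1) - A k) ^ γ + β * (A (k - 1) - A k)) :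
    ∀ k, K ≤ k → A k ≤ ((α + β) / (1 + α + β)) ^ (k - K) * A K := by
  have hc : 0 ≤ α + β := by positivity
  rw [add_assoc]
  refine le_pow_mul_of_le_mul_pred (div_nonneg hc (by linarith)) K fun k hk ↦ ?_
  obtain ⟨hdec, hle_one⟩ := hmono k hk
  have hpow : (A (k - 1) - A k) ^ γ ≤ A (k - 1) - A k :=
    Real.rpow_le_self_of_le_one (by linarith) (by linarith [hA k]) hγ
  refine le_div_one_add_mul_of_le_mul_sub hc ?_
  calc A k ≤ α * (A (k - 1) - A k) ^ γ + β * (A (k - 1) - A k) := hcond k hk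
    _ ≤ α * (A (k - 1) - A k) + β * (A (k - 1) - A k) := by gcongr
    _ = (α + β) * (A (k - 1) - A k) := by ring

/-- Lemma 2.3, item 1 (`γ ≥ 1`): linear convergence of the sequence. -/
theorem rate_lemma_linear
    (A : ℕ → ℝ) (K : ℕ) (hK : 1 ≤ K)
    (hA : ∀ k, 0 ≤ A k)
    (hmono : ∀ k, K + 1 ≤ k → A k ≤ A (k - 1) ∧ A (k - 1) ≤ 1)
    (α β γ : ℝ) (hα : 0 < α) (hβ : 0 < β) (hγ : 1 ≤ γ)
    (hcond : ∀ k, K + 1 ≤ k → A k ≤ α * (A (k - 1) - A k) ^ γ + β * (A (k - 1) - A k)) :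
    ∀ k, K ≤ k → A k ≤ ((α + β) / (1 + α + β)) ^ (k - K) * A K :=
  rate_lemma_linear_general A K hA hmono α β γ hα hβ hγ hcond
end

section
/- Let (A_k)_{k≥1} be a nonnegative real sequence and K a positive integer such that A_k ≤ A_{k−1} ≤ 1 for all k ≥ K + 1. Suppose there are positive constants α, β, γ with 0 < γ < 1 such that A_k ≤ α (A_{k−1} − A_k)^γ + β (A_{k−1} − A_k) for all k ≥ K + 1. Then there exists a positive constant ν such that A_k ≤ ν (k − K)^{−γ/(1−γ)} for all k > K. -/
/-!
With `q = 1/γ - 1` it suffices that `A_k^{-q}` grows at least linearly. Since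
`d = A_{k-1} - A_k ≤ 1` we have `d ≤ d^γ`, so the recursion gives
`A_k^{1+q} ≤ (α + β)^{1/γ} d`.
If `A_{k-1} ≤ 2 A_k`, the tangent line of the convex function `t ↦ t^{-q}` at `A_{k-1}` turns
this into a fixed increment of `A_k^{-q}`; otherwise `A_{k-1}^{-q} ≤ 2^{-q} A_k^{-q}` and
`A_k ≤ 1` give the increment `1 - 2^{-q}`.
-/

open Real

lemma one_add_mul_sub_one_div_le_rpow {q t : ℝ} (hq : 0 ≤ q) (ht : 0 < t) :
    1 + q * ((t - 1) / t) ≤ t ^ q := by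
  have bernoulli := one_add_mul_self_le_rpow_one_add (by linarith : (-1 : ℝ) ≤ t - 1)
    (by linarith : (1 : ℝ) ≤ q + 1)
  rw [add_sub_cancel, rpow_add ht, rpow_one] at bernoulli
  have h : 1 + q * ((t - 1) / t) = (1 + (q + 1) * (t - 1)) / t := by field_simp; ring
  rwa [h, div_le_iff₀ ht]

lemma mul_rpow_neg_mul_sub_div_le_rpow_neg_sub {q x y : ℝ} (hq : 0 ≤ q) (hx : 0 < x)
    (hy : 0 < y) : q * y ^ (-q) * ((y - x) / y) ≤ x ^ (-q) - y ^ (-q) := by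
  have h := one_add_mul_sub_one_div_le_rpow hq (div_pos hy hx)
  have hx_eq : x ^ (-q) = y ^ (-q) * (y / x) ^ q := by
    rw [div_rpow hy.le hx.le, rpow_neg hy.le, rpow_neg hx.le]
    field_simp [(rpow_pos_of_pos hy q).ne']
  have hs : (y / x - 1) / (y / x) = (y - x) / y := by field_simp
  rw [hs] at h
  rw [hx_eq]
  nlinarith [rpow_pos_of_pos hy (-q)]

lemma rpow_inv_le_mul_of_le_mul_rpow_add_mul {α β γ x d : ℝ} (hα : 0 ≤ α) (hβ : 0 ≤ β)
    (hγ0 : 0 < γ) (hγ1 : γ ≤ 1) (hx : 0 ≤ x) (hd0 : 0 ≤ d) (hd1 : d ≤ 1)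
    (h : x ≤ α * d ^ γ + β * d) : x ^ γ⁻¹ ≤ (α + β) ^ γ⁻¹ * d := by
  have hd := self_le_rpow_of_le_one hd0 hd1 hγ1
  have hx' : x ≤ (α + β) * d ^ γ := by nlinarith
  calc x ^ γ⁻¹ ≤ ((α + β) * d ^ γ) ^ γ⁻¹ := by gcongr
    _ = (α + β) ^ γ⁻¹ * d := by
      rw [mul_rpow (by positivity) (by positivity), ← rpow_mul hd0, mul_inv_cancel₀ hγ0.ne',
        rpow_one]

lemma min_le_rpow_neg_sub_rpow_neg {q C x y : ℝ} (hq : 0 < q) (hC : 0 < C) (hx : 0 < x)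
    (hx1 : x ≤ 1) (h : x ^ (1 + q) ≤ C * (y - x)) :
    min (q * 2 ^ (-q) / (2 * C)) (1 - 2 ^ (-q)) ≤ x ^ (-q) - y ^ (-q) := by
  rw [rpow_add hx, rpow_one] at h
  have hxq := rpow_pos_of_pos hx q
  have hxy : x < y := by nlinarith
  have hy : 0 < y := hx.trans hxy
  rcases le_or_gt y (2 * x) with hy2 | hy2
  · refine (min_le_left _ _).trans ?_
    refine le_trans ?_ (mul_rpow_neg_mul_sub_div_le_rpow_neg_sub hq.le hx hy)
    have hd : x ^ q / (2 * C) ≤ (y - x) / y := by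
      rw [div_le_div_iff₀ (by positivity) hy]
      nlinarith
    have h2x : 2 ^ (-q) * x ^ (-q) ≤ y ^ (-q) := by
      rw [← mul_rpow zero_le_two hx.le]
      exact rpow_le_rpow_of_nonpos hy hy2 (by linarith)
    have hinv : x ^ (-q) * x ^ q = 1 := by rw [← rpow_add hx, neg_add_cancel, rpow_zero]
    calc q * 2 ^ (-q) / (2 * C) = q * (2 ^ (-q) * x ^ (-q)) * (x ^ q / (2 * C)) := by
          linear_combination (-(q * 2 ^ (-q) / (2 * C))) * hinv
      _ ≤ q * y ^ (-q) * ((y - x) / y) := by gcongr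
  · refine (min_le_right _ _).trans ?_
    have h2x : y ^ (-q) ≤ 2 ^ (-q) * x ^ (-q) := by
      rw [← mul_rpow zero_le_two hx.le]
      exact rpow_le_rpow_of_nonpos (by positivity) hy2.le (by linarith)
    have hx1' : 1 ≤ x ^ (-q) := one_le_rpow_of_pos_of_le_one_of_nonpos hx hx1 (by linarith)
    have h2 : (2 : ℝ) ^ (-q) < 1 := rpow_lt_one_of_one_lt_of_neg one_lt_two (by linarith)
    nlinarith

lemma mul_le_rpow_neg_of_le_rpow_neg_sub {a : ℕ → ℝ} {q c : ℝ}
    (ha : ∀ n, a (n + 1) ≤ a n)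
    (hstep : ∀ n, 0 < a (n + 1) → c ≤ a (n + 1) ^ (-q) - a n ^ (-q)) :
    ∀ n, 0 < a n → c * n ≤ a n ^ (-q) := by
  intro n
  induction n with
  | zero => intro h0; simpa using rpow_nonneg h0.le (-q)
  | succ n ih =>
    intro hpos
    have := ih (hpos.trans_le (ha n))
    have := hstep n hpos
    push_cast
    linarith

lemma le_rpow_neg_inv_of_le_rpow_neg {a b q : ℝ} (hq : 0 < q) (hb : 0 < b) (ha : 0 < a)
    (h : b ≤ a ^ (-q)) : a ≤ b ^ (-q⁻¹) := by
  calc a = (a ^ (-q)) ^ (-q⁻¹) := by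
        rw [← rpow_mul ha.le, neg_mul_neg, mul_inv_cancel₀ hq.ne', rpow_one]
    _ ≤ b ^ (-q⁻¹) := rpow_le_rpow_of_nonpos hb h (by simpa using hq.le)

theorem rate_lemma_sublinear_general
    (A : ℕ → ℝ) (K : ℕ)
    (hA : ∀ k, 0 ≤ A k)
    (hmono : ∀ k, K + 1 ≤ k → A k ≤ A (k - 1) ∧ A (k - 1) ≤ 1)
    (α β γ : ℝ) (hα : 0 < α) (hβ : 0 < β) (hγ0 : 0 < γ) (hγ1 : γ < 1)
    (hcond : ∀ k, K + 1 ≤ k → A k ≤ α * (A (k - 1) - A k) ^ γ + β * (A (k - 1) - A k)) :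
    ∃ ν : ℝ, 0 < ν ∧ ∀ k, K < k →
      A k ≤ ν * ((k : ℝ) - (K : ℝ)) ^ (-(γ / (1 - γ))) := by
  set q := γ⁻¹ - 1 with hq_def
  have hq : 0 < q := sub_pos.2 ((one_lt_inv₀ hγ0).2 hγ1)
  set c := min (q * 2 ^ (-q) / (2 * (α + β) ^ γ⁻¹)) (1 - 2 ^ (-q))
  have hc : 0 < c := lt_min (by positivity)
    (by linarith [rpow_lt_one_of_one_lt_of_neg one_lt_two (neg_neg_of_pos hq)])
  have hstep : ∀ n, 0 < A (K + n + 1) → c ≤ A (K + n + 1) ^ (-q) - A (K + n) ^ (-q) := by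
    intro n hx
    obtain ⟨hle, hle1⟩ := hmono (K + n + 1) (by omega)
    have hrec := hcond (K + n + 1) (by omega)
    rw [Nat.add_sub_cancel] at hle hle1 hrec
    refine min_le_rpow_neg_sub_rpow_neg hq (by positivity) hx (hle.trans hle1) ?_
    rw [show 1 + q = γ⁻¹ by rw [hq_def]; ring]
    exact rpow_inv_le_mul_of_le_mul_rpow_add_mul hα.le hβ.le hγ0 hγ1.le (hA _) (by linarith)
      (by linarith [hA (K + n + 1)]) hrec
  have hrate := mul_le_rpow_neg_of_le_rpow_neg_sub (a := fun n ↦ A (K + n))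
    (fun n ↦ (hmono (K + n + 1) (by omega)).1) hstep
  refine ⟨c ^ (-q⁻¹), by positivity, fun k hk ↦ ?_⟩
  obtain ⟨n, rfl⟩ : ∃ n, k = K + n := ⟨k - K, by omega⟩
  have hn : (0 : ℝ) < n := by exact_mod_cast (by omega : 0 < n)
  have hexp : -(γ / (1 - γ)) = -q⁻¹ := by
    have : 1 - γ ≠ 0 := (sub_pos.2 hγ1).ne'
    rw [hq_def]
    field_simp
  rw [Nat.cast_add, add_sub_cancel_left, hexp, ← mul_rpow hc.le hn.le]
  rcases (hA (K + n)).eq_or_lt with h0 | hpos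
  · rw [← h0]; positivity
  · exact le_rpow_neg_inv_of_le_rpow_neg hq (by positivity) hpos (hrate n hpos)

/-- Lemma 2.3, item 2 (`0 < γ < 1`): sublinear convergence of the sequence. -/
theorem rate_lemma_sublinear
    (A : ℕ → ℝ) (K : ℕ) (hK : 1 ≤ K)
    (hA : ∀ k, 0 ≤ A k)
    (hmono : ∀ k, K + 1 ≤ k → A k ≤ A (k - 1) ∧ A (k - 1) ≤ 1)
    (α β γ : ℝ) (hα : 0 < α) (hβ : 0 < β) (hγ0 : 0 < γ) (hγ1 : γ < 1)
    (hcond : ∀ k, K + 1 ≤ k → A k ≤ α * (A (k - 1) - A k) ^ γ + β * (A (k - 1) - A k)) :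
    ∃ ν : ℝ, 0 < ν ∧ ∀ k, K < k →
      A k ≤ ν * ((k : ℝ) - (K : ℝ)) ^ (-(γ / (1 - γ))) :=
  rate_lemma_sublinear_general A K hA hmono α β γ hα hβ hγ0 hγ1 hcond
end

section
/- Let X be an m×p real matrix and Y an n×p real matrix, both with all entries nonnegative, and suppose every column of X has Euclidean norm 1. If a ≥ 0 is a constant such that every entry of the matrix X·Yᵀ is at most a, then every entry of Y is at most a·√m. -/
open Finset

/-- Proof of Theorem 3.3: if `X ≥ 0` has unit-norm columns, `Y ≥ 0`, and all
entries of `X Yᵀ` are at most `a`, then all entries of `Y` are at most `a √m`. -/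
theorem entries_bound_of_product_bound
    (m n p : ℕ) (X : Matrix (Fin m) (Fin p) ℝ) (Y : Matrix (Fin n) (Fin p) ℝ)
    (hX : ∀ i j, 0 ≤ X i j) (hY : ∀ i j, 0 ≤ Y i j)
    (hcol : ∀ j, ∑ i, (X i j) ^ 2 = 1)
    (a : ℝ) (ha : 0 ≤ a)
    (hprod : ∀ i j, (X * Y.transpose) i j ≤ a) :
    ∀ i j, Y i j ≤ a * Real.sqrt m := by
  intro i j
  -- m > 0
  have hm : 0 < m := by
    by_contra h
    have hm0 : m = 0 := by omega
    have := hcol j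
    subst hm0
    simp at this
  have hmR : (0:ℝ) < m := by exact_mod_cast hm
  -- there exists i0 with X i0 j ^ 2 ≥ 1/m
  have hex : ∃ i0 : Fin m, 1/(m:ℝ) ≤ (X i0 j)^2 := by
    by_contra h
    push_neg at h
    have hsum : ∑ i0, (X i0 j)^2 < ∑ _i0 : Fin m, 1/(m:ℝ) := by
      apply Finset.sum_lt_sum_of_nonempty
      · exact Finset.univ_nonempty_iff.mpr ⟨⟨0, hm⟩⟩
      · intro i0 _; exact h i0
    rw [hcol j] at hsum
    simp only [Finset.sum_const, Finset.card_univ, Fintype.card_fin, nsmul_eq_mul] at hsum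
    rw [mul_one_div, div_self (ne_of_gt hmR)] at hsum
    exact lt_irrefl _ hsum
  obtain ⟨i0, hi0⟩ := hex
  have hX0 : 1 / Real.sqrt m ≤ X i0 j := by
    have h1 : Real.sqrt (1/(m:ℝ)) ≤ Real.sqrt ((X i0 j)^2) := Real.sqrt_le_sqrt hi0
    rwa [Real.sqrt_div' 1 (le_of_lt hmR), Real.sqrt_one,
      Real.sqrt_sq (hX i0 j)] at h1
  have hsqrt : 0 < Real.sqrt m := Real.sqrt_pos.mpr hmR
  -- key inequality
  have hkey : X i0 j * Y i j ≤ a := by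
    calc X i0 j * Y i j ≤ ∑ k, X i0 k * Y i k := by
          apply Finset.single_le_sum (f := fun k => X i0 k * Y i k)
          · intro k _; exact mul_nonneg (hX i0 k) (hY i k)
          · exact Finset.mem_univ j
      _ = (X * Y.transpose) i0 i := by
          simp [Matrix.mul_apply, Matrix.transpose_apply]
      _ ≤ a := hprod i0 i
  have h2 : (1 / Real.sqrt m) * Y i j ≤ X i0 j * Y i j :=
    mul_le_mul_of_nonneg_right hX0 (hY i j)
  have h3 : (1 / Real.sqrt m) * Y i j ≤ a := le_trans h2 hkey
  calc Y i j = Real.sqrt m * ((1 / Real.sqrt m) * Y i j) := by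
        field_simp
    _ ≤ Real.sqrt m * a := mul_le_mul_of_nonneg_left h3 (le_of_lt hsqrt)
    _ = a * Real.sqrt m := mul_comm _ _
end

section
/- Let λ > 0 and γ > 2, and define the smoothly clipped absolute deviation (SCAD) penalty r_{λ,γ} : ℝ → ℝ by r_{λ,γ}(θ) = λ|θ| if |θ| ≤ λ, r_{λ,γ}(θ) = (2γλ|θ| − (θ² + λ²))/(2(γ−1)) if λ < |θ| ≤ γλ, and r_{λ,γ}(θ) = λ²(γ²−1)/(2(γ−1)) if |θ| > γλ. Then the function g(θ) = θ²/2 + r_{λ,γ}(θ) is strongly convex on ℝ with modulus (γ−2)/(γ−1); that is, θ ↦ g(θ) − ((γ−2)/(2(γ−1)))·θ² is convex on ℝ. -/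
/-!
Since `1/2 - (γ - 2)/(2(γ - 1)) = 1/(2(γ - 1))`, the function in question is
`θ ↦ (θ² + 2(γ - 1) r(θ)) / (2(γ - 1))`. On `θ ≥ 0` the numerator is
`2γλθ - λ² + (λ - θ)₊² + (θ - γλ)₊²`, a sum of an affine function and squares of nonnegative
convex functions, hence convex on all of `ℝ`; it vanishes at `0` and is nonnegative on `[0, ∞)`,
so by convexity it is monotone there. A convex function that is monotone on `[0, ∞)`, composed
with the convex function `|·|`, is convex.
-/

open Set

theorem ConvexOn.monotoneOn_Ici {φ : ℝ → ℝ} {a : ℝ} (hφ : ConvexOn ℝ (Ici a) φ)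
    (ha : ∀ t ∈ Ici a, φ a ≤ φ t) : MonotoneOn φ (Ici a) := by
  intro s hs t ht hst
  have hs_seg : s ∈ segment ℝ a t := by
    rw [segment_eq_Icc (le_trans hs hst)]
    exact ⟨hs, hst⟩
  calc φ s ≤ max (φ a) (φ t) := hφ.le_on_segment self_mem_Ici ht hs_seg
    _ = φ t := max_eq_right (ha t ht)

theorem ConvexOn.comp_abs {φ : ℝ → ℝ} (hφ : ConvexOn ℝ (Ici 0) φ)
    (hmono : MonotoneOn φ (Ici 0)) : ConvexOn ℝ univ fun x => φ |x| := by
  have himage : (fun x : ℝ => |x|) '' univ = Ici 0 := by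
    ext t
    exact ⟨by rintro ⟨x, -, rfl⟩; exact abs_nonneg x, fun ht => ⟨t, trivial, abs_of_nonneg ht⟩⟩
  exact ConvexOn.comp (himage ▸ hφ) convexOn_univ_norm (himage ▸ hmono)

theorem ConvexOn.max_zero_sq {s : Set ℝ} {f : ℝ → ℝ} (hf : ConvexOn ℝ s f) :
    ConvexOn ℝ s fun x => max (f x) 0 ^ 2 :=
  (hf.sup (convexOn_const 0 hf.1)).pow (fun _ _ => le_max_right _ _) 2

noncomputable def scadPenalty (lam γ θ : ℝ) : ℝ :=
  if |θ| ≤ lam then lam * |θ|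
  else if |θ| ≤ γ * lam then (2 * γ * lam * |θ| - (θ ^ 2 + lam ^ 2)) / (2 * (γ - 1))
  else lam ^ 2 * (γ ^ 2 - 1) / (2 * (γ - 1))

def scadProfile (lam γ t : ℝ) : ℝ :=
  2 * γ * lam * t - lam ^ 2 + max (lam - t) 0 ^ 2 + max (t - γ * lam) 0 ^ 2

theorem convexOn_scadProfile (lam γ : ℝ) : ConvexOn ℝ univ (scadProfile lam γ) := by
  have hlin : ConvexOn ℝ univ fun t : ℝ => 2 * γ * lam * t + -lam ^ 2 :=
    ((LinearMap.mulLeft ℝ (2 * γ * lam)).convexOn convex_univ).add_const _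
  have hlow := ((convexOn_const lam convex_univ).sub (concaveOn_id convex_univ)).max_zero_sq
  have hhigh := ((convexOn_id convex_univ).sub (concaveOn_const (γ * lam) convex_univ)).max_zero_sq
  exact (hlin.add hlow).add hhigh

theorem scadProfile_zero_le {lam γ t : ℝ} (hlam : 0 ≤ lam) (hγ : 1 ≤ γ) (ht : 0 ≤ t) :
    scadProfile lam γ 0 ≤ scadProfile lam γ t := by
  have hzero : scadProfile lam γ 0 = 0 := by
    rw [scadProfile, sub_zero, zero_sub, max_eq_left hlam, max_eq_right (by nlinarith)]
    ring
  rw [hzero, scadProfile]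
  rcases le_total t lam with htl | htl
  · rw [max_eq_left (sub_nonneg.2 htl)]
    nlinarith [sq_nonneg (max (t - γ * lam) 0), mul_nonneg (mul_nonneg (sub_nonneg.2 hγ) hlam) ht]
  · rw [max_eq_right (sub_nonpos.2 htl)]
    nlinarith [sq_nonneg (max (t - γ * lam) 0),
      mul_nonneg (mul_nonneg (by linarith : 0 ≤ 2 * γ) hlam) (sub_nonneg.2 htl),
      mul_nonneg (by linarith : 0 ≤ 2 * γ - 1) (sq_nonneg lam)]

theorem scadPenalty_eq {lam γ : ℝ} (hlam : 0 ≤ lam) (hγ : 1 < γ) (θ : ℝ) :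
    2 * (γ - 1) * scadPenalty lam γ θ + θ ^ 2 = scadProfile lam γ |θ| := by
  have hγlam : lam ≤ γ * lam := by nlinarith
  have hγ1 : 2 * (γ - 1) ≠ 0 := by linarith
  rw [scadPenalty, scadProfile, ← sq_abs θ]
  split_ifs with h₁ h₂
  · rw [max_eq_left (by linarith), max_eq_right (by linarith)]
    ring
  · rw [max_eq_right (by linarith), max_eq_right (by linarith)]
    rw [mul_div_cancel₀ _ hγ1]
    ring
  · rw [max_eq_right (by linarith), max_eq_left (by linarith)]
    rw [mul_div_cancel₀ _ hγ1]
    ring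

/-- The SCAD-regularized quadratic `θ ↦ θ²/2 + r_{λ,γ}(θ)` is strongly convex
with modulus `(γ−2)/(γ−1)` when `γ > 2`. -/
theorem scad_strongly_convex
    (lam γ : ℝ) (hlam : 0 < lam) (hγ : 2 < γ)
    (r : ℝ → ℝ)
    (hr : ∀ θ : ℝ, r θ =
      if |θ| ≤ lam then lam * |θ|
      else if |θ| ≤ γ * lam then
        (2 * γ * lam * |θ| - (θ ^ 2 + lam ^ 2)) / (2 * (γ - 1))
      else lam ^ 2 * (γ ^ 2 - 1) / (2 * (γ - 1))) :
    ConvexOn ℝ Set.univ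
      (fun θ : ℝ => (θ ^ 2 / 2 + r θ) - ((γ - 2) / (2 * (γ - 1))) * θ ^ 2) := by
  obtain rfl : r = scadPenalty lam γ := funext hr
  have hγ1 : 0 < γ - 1 := by linarith
  have hprofile : ConvexOn ℝ (Ici 0) (scadProfile lam γ) :=
    (convexOn_scadProfile lam γ).subset (subset_univ _) (convex_Ici 0)
  have hmono : MonotoneOn (scadProfile lam γ) (Ici 0) :=
    hprofile.monotoneOn_Ici fun _ ht => scadProfile_zero_le hlam.le (by linarith) ht
  refine ((hprofile.comp_abs hmono).smul (c := (2 * (γ - 1))⁻¹) (by positivity)).congr fun θ _ => ?_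
  change (2 * (γ - 1))⁻¹ * scadProfile lam γ |θ| = _
  rw [← scadPenalty_eq hlam.le (by linarith) θ]
  field_simp [hγ1.ne']
  ring
end
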